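/- arXiv:2304.13675 — 11 statements merged into one kernel-verified Lean document; each statement's English description precedes it below -/
import Mathlib

section
/- Let k ≥ 2, let G = (V,E) be a graph, and let W ⊆ V. If W is a face of Δ_k(G), then Δ_k(G \ W) = lk_{Δ_k(G)}(W), the link of W in Δ_k(G); if W is not a face of Δ_k(G), then Δ_k(G \ W) is the void complex. -/
/-!
A `k`-set of vertices of `G \ W` avoiding `τ` is the same thing as a `k`-set of vertices of `G`
avoiding `W ∪ τ`, and it induces the same graph in `G \ W` as in `G`. Hence `τ` is a face of
`Δ_k(G \ W)` exactly when `W ∪ τ` is a face of `Δ_k(G)`; since faces are closed under taking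
subsets, `Δ_k(G \ W)` has a face only if `W` is one.
-/

open Finset

/-- The induced subgraph of `G` on the vertex set `S` is disconnected. -/
def IsDisconn {V : Type*} (G : SimpleGraph V) (S : Finset V) : Prop :=
  ¬ (G.induce (S : Set V)).Connected

/-- `σ` is a face of the k-cut complex `Δ_k(G)`: the complement of `σ`
contains a `k`-subset inducing a disconnected subgraph. -/
def IsFace {V : Type*} [Fintype V] [DecidableEq V] (G : SimpleGraph V) (k : ℕ)
    (σ : Finset V) : Prop :=
  ∃ S : Finset V, S ⊆ σᶜ ∧ S.card = k ∧ IsDisconn G S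

/-- `F` is a facet of the k-cut complex `Δ_k(G)`: the complement of `F` is a
disconnected `k`-set. -/
def IsFacet {V : Type*} [Fintype V] [DecidableEq V] (G : SimpleGraph V) (k : ℕ)
    (F : Finset V) : Prop :=
  Fᶜ.card = k ∧ IsDisconn G Fᶜ

/-- A list of the facets of a pure complex is a shelling order. -/
def IsShelling {V : Type*} [DecidableEq V] (l : List (Finset V)) : Prop :=
  ∀ i j : ℕ, i < j → j < l.length →
    ∃ m, m < j ∧ (l.getD i ∅ ∩ l.getD j ∅ ⊆ l.getD m ∅ ∩ l.getD j ∅) ∧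
      (l.getD m ∅ ∩ l.getD j ∅).card + 1 = (l.getD j ∅).card

/-- A complex, given by its facet predicate, is shellable. -/
def Shellable {V : Type*} [DecidableEq V] (Fac : Finset V → Prop) : Prop :=
  ∃ l : List (Finset V), l.Nodup ∧ (∀ F, F ∈ l ↔ Fac F) ∧ IsShelling l

section CutComplex

variable {V : Type*}

lemma isDisconn_induce_iff (G : SimpleGraph V) {A : Set V} (S : Finset A) :
    IsDisconn (G.induce A) S ↔ IsDisconn G (S.map (Function.Embedding.subtype _)) := by
  have hS : Subtype.val '' (S : Set A) = (S.map (Function.Embedding.subtype _) : Set V) := by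
    simp
  let e : (G.induce A).induce (S : Set A) ≃g
      G.induce (S.map (Function.Embedding.subtype _) : Set V) :=
    ⟨(Equiv.Set.image Subtype.val _ Subtype.val_injective).trans (Equiv.setCongr hS), Iff.rfl⟩
  exact not_congr e.connected_iff

variable [Fintype V] [DecidableEq V] {G : SimpleGraph V} {k : ℕ}

lemma IsFace.mono {σ τ : Finset V} (h : IsFace G k τ) (hστ : σ ⊆ τ) : IsFace G k σ := by
  obtain ⟨S, hS, hcard, hdis⟩ := h
  exact ⟨S, hS.trans (compl_subset_compl.2 hστ), hcard, hdis⟩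

lemma disjoint_map_subtype_compl (W : Finset V) (τ : Finset (↑Wᶜ : Set V)) :
    Disjoint W (τ.map (Function.Embedding.subtype _)) := by
  rw [disjoint_left]
  intro v hvW hv
  obtain ⟨⟨w, hw⟩, -, rfl⟩ := mem_map.1 hv
  simp_all

lemma map_subtype_subset_compl_union_iff (W : Finset V) (S τ : Finset (↑Wᶜ : Set V)) :
    S.map (Function.Embedding.subtype _) ⊆ (W ∪ τ.map (Function.Embedding.subtype _))ᶜ ↔
      S ⊆ τᶜ := by
  constructor
  · intro h x hx
    exact mem_compl.2 fun hxτ ↦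
      mem_compl.1 (h (mem_map_of_mem _ hx)) (mem_union_right _ (mem_map_of_mem _ hxτ))
  · intro h v hv
    obtain ⟨x, hx, rfl⟩ := mem_map.1 hv
    rw [mem_compl, mem_union, not_or]
    exact ⟨by simpa using x.2, fun hxτ ↦ mem_compl.1 (h hx) ((mem_map' _).1 hxτ)⟩

lemma isFace_induce_compl_iff (W : Finset V) (τ : Finset (↑Wᶜ : Set V)) :
    IsFace (G.induce (↑Wᶜ : Set V)) k τ ↔
      IsFace G k (W ∪ τ.map (Function.Embedding.subtype _)) := by
  constructor
  · rintro ⟨S, hS, rfl, hdis⟩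
    exact ⟨S.map _, (map_subtype_subset_compl_union_iff W S τ).2 hS, card_map _,
      (isDisconn_induce_iff G S).1 hdis⟩
  · rintro ⟨S, hS, rfl, hdis⟩
    obtain ⟨S, -, rfl⟩ :
        ∃ T ⊆ univ, S = T.map (Function.Embedding.subtype (· ∈ (↑Wᶜ : Set V))) := by
      rw [← subset_map_iff]
      intro v hv
      simpa using (mem_compl.1 (hS hv) <| mem_union_left _ ·)
    exact ⟨S, (map_subtype_subset_compl_union_iff W S τ).1 hS, (card_map _).symm,
      (isDisconn_induce_iff G S).2 hdis⟩

end CutComplex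

theorem stmt_3_general {V : Type*} [Fintype V] [DecidableEq V] (G : SimpleGraph V) (k : ℕ)
    (W : Finset V) :
    (IsFace G k W →
      ∀ τ : Finset ((↑Wᶜ : Set V)),
        IsFace (G.induce (↑Wᶜ : Set V)) k τ ↔
          (Disjoint W (τ.map (Function.Embedding.subtype _)) ∧
            IsFace G k (W ∪ τ.map (Function.Embedding.subtype _)))) ∧
    (¬ IsFace G k W →
      ∀ τ : Finset ((↑Wᶜ : Set V)), ¬ IsFace (G.induce (↑Wᶜ : Set V)) k τ) := by
  refine ⟨fun _ τ ↦ ?_, fun hW τ hτ ↦ ?_⟩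
  · rw [isFace_induce_compl_iff]
    exact ⟨fun h ↦ ⟨disjoint_map_subtype_compl W τ, h⟩, And.right⟩
  · exact hW ((isFace_induce_compl_iff W τ).1 hτ |>.mono subset_union_left)

/-- For `k ≥ 2` and `W ⊆ V`: if `W` is a face of `Δ_k(G)` then
`Δ_k(G \ W)` equals the link of `W` in `Δ_k(G)` (a set `τ` of vertices of `G \ W`
is a face of `Δ_k(G \ W)` iff it is disjoint from `W` and `W ∪ τ` is a face of
`Δ_k(G)`); if `W` is not a face of `Δ_k(G)`, then `Δ_k(G \ W)` is the void
complex. -/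
theorem stmt_3 {V : Type*} [Fintype V] [DecidableEq V] (G : SimpleGraph V) (k : ℕ)
    (hk : 2 ≤ k) (W : Finset V) :
    (IsFace G k W →
      ∀ τ : Finset ((↑Wᶜ : Set V)),
        IsFace (G.induce (↑Wᶜ : Set V)) k τ ↔
          (Disjoint W (τ.map (Function.Embedding.subtype _)) ∧
            IsFace G k (W ∪ τ.map (Function.Embedding.subtype _)))) ∧
    (¬ IsFace G k W →
      ∀ τ : Finset ((↑Wᶜ : Set V)), ¬ IsFace (G.induce (↑Wᶜ : Set V)) k τ) :=
  stmt_3_general G k W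
end

section
/- Let k ≥ 2 and let G_1, G_2 be graphs on disjoint vertex sets V_1, V_2, and let G_1 * G_2 be their join (disjoint union together with all edges between V_1 and V_2). Then a subset S of V_1 ∪ V_2 of size k induces a disconnected subgraph of G_1 * G_2 if and only if S ⊆ V_1 and G_1[S] is disconnected, or S ⊆ V_2 and G_2[S] is disconnected. Consequently Δ_k(G_1 * G_2) = (Δ_k(G_1) * ⟨V_2⟩) ∪ (⟨V_1⟩ * Δ_k(G_2)), where ⟨V⟩ denotes the full simplex on vertex set V and * denotes the join of simplicial complexes. -/
/-!
A disconnected set of the join cannot meet both sides: a vertex `inl a` and a vertex `inr b`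
are adjacent to everything on the opposite side, so they connect the whole set. A one-sided set
induces the same graph as in its own side, because the inclusions of `G₁` and `G₂` into the join
are induced embeddings. Faces then split by which side their disconnected `k`-set lies in.
-/

open Finset

/-- The join of two graphs on disjoint vertex sets: their disjoint union together
with all edges between the two sides. -/
def joinGraph {α β : Type*} (G₁ : SimpleGraph α) (G₂ : SimpleGraph β) :
    SimpleGraph (α ⊕ β) where
  Adj x y :=
    match x, y with
    | Sum.inl a, Sum.inl b => G₁.Adj a b
    | Sum.inr a, Sum.inr b => G₂.Adj a b
    | Sum.inl _, Sum.inr _ => True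
    | Sum.inr _, Sum.inl _ => True
  symm := by
    constructor
    intro x y h
    cases x <;> cases y <;> simp_all [SimpleGraph.adj_comm]
  loopless := by
    constructor
    intro x h
    cases x <;> simp_all

namespace SimpleGraph.Embedding

variable {V W : Type*} {G : SimpleGraph V} {H : SimpleGraph W}

noncomputable def induceImage (f : G ↪g H) (s : Set V) : G.induce s ≃g H.induce (f '' s) where
  toEquiv := Equiv.Set.image f s f.injective
  map_rel_iff' := by simp

theorem connected_induce_image_iff (f : G ↪g H) (s : Set V) :
    (H.induce (f '' s)).Connected ↔ (G.induce s).Connected :=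
  (f.induceImage s).connected_iff.symm

end SimpleGraph.Embedding

namespace Finset

variable {α β : Type*} [Fintype α] [Fintype β] [DecidableEq α] [DecidableEq β]

theorem toLeft_compl (σ : Finset (α ⊕ β)) : σᶜ.toLeft = σ.toLeftᶜ := by
  ext; simp

theorem toRight_compl (σ : Finset (α ⊕ β)) : σᶜ.toRight = σ.toRightᶜ := by
  ext; simp

end Finset

section joinGraph

variable {α β : Type*} (G₁ : SimpleGraph α) (G₂ : SimpleGraph β)

def joinGraph.inl : G₁ ↪g joinGraph G₁ G₂ where
  toEmbedding := .inl
  map_rel_iff' := Iff.rfl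

def joinGraph.inr : G₂ ↪g joinGraph G₁ G₂ where
  toEmbedding := .inr
  map_rel_iff' := Iff.rfl

theorem isDisconn_joinGraph_map_inl_iff (S₁ : Finset α) :
    IsDisconn (joinGraph G₁ G₂) (S₁.map .inl) ↔ IsDisconn G₁ S₁ := by
  rw [IsDisconn, IsDisconn, coe_map]
  exact not_congr ((joinGraph.inl G₁ G₂).connected_induce_image_iff _)

theorem isDisconn_joinGraph_map_inr_iff (S₂ : Finset β) :
    IsDisconn (joinGraph G₁ G₂) (S₂.map .inr) ↔ IsDisconn G₂ S₂ := by
  rw [IsDisconn, IsDisconn, coe_map]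
  exact not_congr ((joinGraph.inr G₁ G₂).connected_induce_image_iff _)

theorem connected_induce_joinGraph_of_inl_mem_of_inr_mem {s : Set (α ⊕ β)} {a : α} {b : β}
    (ha : .inl a ∈ s) (hb : .inr b ∈ s) : ((joinGraph G₁ G₂).induce s).Connected := by
  have toA : ∀ x : s, ((joinGraph G₁ G₂).induce s).Reachable x ⟨.inl a, ha⟩ := by
    rintro ⟨u | v, hx⟩
    · have hub : ((joinGraph G₁ G₂).induce s).Adj ⟨.inl u, hx⟩ ⟨.inr b, hb⟩ := trivial
      have hba : ((joinGraph G₁ G₂).induce s).Adj ⟨.inr b, hb⟩ ⟨.inl a, ha⟩ := trivial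
      exact hub.reachable.trans hba.reachable
    · have hva : ((joinGraph G₁ G₂).induce s).Adj ⟨.inr v, hx⟩ ⟨.inl a, ha⟩ := trivial
      exact hva.reachable
  have : Nonempty s := ⟨⟨_, ha⟩⟩
  exact .mk fun x y => (toA x).trans (toA y).symm

variable [DecidableEq α] [DecidableEq β]

theorem isDisconn_joinGraph_iff (S : Finset (α ⊕ β)) :
    IsDisconn (joinGraph G₁ G₂) S ↔
      (∃ S₁ : Finset α, S = S₁.map .inl ∧ IsDisconn G₁ S₁) ∨
      (∃ S₂ : Finset β, S = S₂.map .inr ∧ IsDisconn G₂ S₂) := by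
  refine ⟨fun hS => ?_, ?_⟩
  · have hOneSided : S.toRight = ∅ ∨ S.toLeft = ∅ := by
      by_contra! h
      obtain ⟨⟨b, hb⟩, ⟨a, ha⟩⟩ := h
      exact hS (connected_induce_joinGraph_of_inl_mem_of_inr_mem G₁ G₂
        (mem_toLeft.1 ha) (mem_toRight.1 hb))
    rcases hOneSided with h | h
    · have hS₁ : S = S.toLeft.map .inl := by
        rw [← disjSum_empty, ← h, toLeft_disjSum_toRight]
      exact .inl ⟨_, hS₁, (isDisconn_joinGraph_map_inl_iff G₁ G₂ _).1 (hS₁ ▸ hS)⟩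
    · have hS₂ : S = S.toRight.map .inr := by
        rw [← empty_disjSum, ← h, toLeft_disjSum_toRight]
      exact .inr ⟨_, hS₂, (isDisconn_joinGraph_map_inr_iff G₁ G₂ _).1 (hS₂ ▸ hS)⟩
  · rintro (⟨S₁, rfl, hS₁⟩ | ⟨S₂, rfl, hS₂⟩)
    · exact (isDisconn_joinGraph_map_inl_iff G₁ G₂ S₁).2 hS₁
    · exact (isDisconn_joinGraph_map_inr_iff G₁ G₂ S₂).2 hS₂

variable [Fintype α] [Fintype β]

theorem isFace_joinGraph_iff (k : ℕ) (σ : Finset (α ⊕ β)) :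
    IsFace (joinGraph G₁ G₂) k σ ↔ IsFace G₁ k σ.toLeft ∨ IsFace G₂ k σ.toRight := by
  simp only [IsFace, isDisconn_joinGraph_iff, and_or_left, exists_or]
  apply or_congr <;>
    simp [map_inl_subset_iff_subset_toLeft, map_inr_subset_iff_subset_toRight,
      ← toLeft_compl, ← toRight_compl]

end joinGraph

theorem stmt_4_general {α β : Type*} [Fintype α] [Fintype β] [DecidableEq α] [DecidableEq β]
    (G₁ : SimpleGraph α) (G₂ : SimpleGraph β) (k : ℕ) :
    (∀ S : Finset (α ⊕ β), S.card = k →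
      (IsDisconn (joinGraph G₁ G₂) S ↔
        (∃ S₁ : Finset α, S = S₁.map (Function.Embedding.inl) ∧ IsDisconn G₁ S₁) ∨
        (∃ S₂ : Finset β, S = S₂.map (Function.Embedding.inr) ∧ IsDisconn G₂ S₂))) ∧
    (∀ σ : Finset (α ⊕ β),
      IsFace (joinGraph G₁ G₂) k σ ↔ IsFace G₁ k σ.toLeft ∨ IsFace G₂ k σ.toRight) :=
  ⟨fun S _ => isDisconn_joinGraph_iff G₁ G₂ S, isFace_joinGraph_iff G₁ G₂ k⟩

/-- A `k`-subset of the join `G₁ * G₂` is disconnected iff it lies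
entirely in one side and is disconnected there; consequently
`Δ_k(G₁ * G₂) = (Δ_k(G₁) * ⟨V₂⟩) ∪ (⟨V₁⟩ * Δ_k(G₂))`, i.e. a set `σ` is a face of
`Δ_k(G₁ * G₂)` iff its `α`-part is a face of `Δ_k(G₁)` or its `β`-part is a face
of `Δ_k(G₂)`. -/
theorem stmt_4 {α β : Type*} [Fintype α] [Fintype β] [DecidableEq α] [DecidableEq β]
    (G₁ : SimpleGraph α) (G₂ : SimpleGraph β) (k : ℕ) (hk : 2 ≤ k) :
    (∀ S : Finset (α ⊕ β), S.card = k →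
      (IsDisconn (joinGraph G₁ G₂) S ↔
        (∃ S₁ : Finset α, S = S₁.map (Function.Embedding.inl) ∧ IsDisconn G₁ S₁) ∨
        (∃ S₂ : Finset β, S = S₂.map (Function.Embedding.inr) ∧ IsDisconn G₂ S₂))) ∧
    (∀ σ : Finset (α ⊕ β),
      IsFace (joinGraph G₁ G₂) k σ ↔ IsFace G₁ k σ.toLeft ∨ IsFace G₂ k σ.toRight) :=
  stmt_4_general G₁ G₂ k
end

section
/- Let k ≥ 2 and let G_1, G_2 be graphs on disjoint vertex sets V_1 and V_2. Suppose both Δ_k(G_1) and Δ_k(G_2) have at least one facet, i.e., both D_k(G_1) and D_k(G_2) are nonempty. Then Δ_k(G_1 * G_2) is not shellable. -/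
open Finset

/-!
Every set meeting both sides of a join induces a connected subgraph, so the complement of each
facet of `Δ_k(G₁ * G₂)` lies on one side. Take facets `F₁`, `F₂` whose complements lie on
different sides and suppose `F₂` comes later in a shelling. The shelling condition gives an
earlier facet `H` with `F₂ \ H = {x}` and `x ∉ F₁`, so `x` lies on the side of `F₁ᶜ`; since
`|Hᶜ| = k ≥ 2`, `Hᶜ` also contains a point of `F₂ᶜ`, on the other side, which is impossible.
-/

noncomputable def SimpleGraph.Embedding.induceImageIso {V W : Type*} {G : SimpleGraph V}
    {G' : SimpleGraph W} (f : G ↪g G') (s : Set V) : G.induce s ≃g G'.induce (f '' s) :=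
  { Equiv.Set.image f s f.injective with map_rel_iff' := f.map_adj_iff }

section Embedding

variable {V W : Type*} {G : SimpleGraph V} {G' : SimpleGraph W}

lemma IsDisconn.map [DecidableEq W] {S : Finset V} (h : IsDisconn G S) (f : G ↪g G') :
    IsDisconn G' (S.map f.toEmbedding) := by
  rw [IsDisconn, coe_map]
  exact fun hc => h ((f.induceImageIso S).connected_iff.mpr hc)

lemma isFacet_compl_map [Fintype W] [DecidableEq W] {k : ℕ} {S : Finset V} (hS : S.card = k)
    (hdis : IsDisconn G S) (f : G ↪g G') : IsFacet G' k (S.map f.toEmbedding)ᶜ := by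
  rw [IsFacet, compl_compl, card_map]
  exact ⟨hS, hdis.map f⟩

end Embedding

namespace joinGraph

variable {α β : Type*} (G₁ : SimpleGraph α) (G₂ : SimpleGraph β)

def inlEmbedding : G₁ ↪g joinGraph G₁ G₂ := ⟨Function.Embedding.inl, Iff.rfl⟩

def inrEmbedding : G₂ ↪g joinGraph G₁ G₂ := ⟨Function.Embedding.inr, Iff.rfl⟩

variable {G₁ G₂}

lemma induce_connected_of_inl_mem_of_inr_mem {S : Set (α ⊕ β)} {a : α} {b : β}
    (ha : Sum.inl a ∈ S) (hb : Sum.inr b ∈ S) : ((joinGraph G₁ G₂).induce S).Connected := by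
  have adj : ∀ (a : α) (b : β) (ha : Sum.inl a ∈ S) (hb : Sum.inr b ∈ S),
      ((joinGraph G₁ G₂).induce S).Adj ⟨_, ha⟩ ⟨_, hb⟩ := fun _ _ _ _ => trivial
  have reach_b : ∀ u : S, ((joinGraph G₁ G₂).induce S).Reachable u ⟨_, hb⟩ := by
    rintro ⟨x | y, hu⟩
    · exact (adj x b hu hb).reachable
    · exact (adj a y ha hu).symm.reachable.trans (adj a b ha hb).reachable
  have : Nonempty S := ⟨⟨_, hb⟩⟩
  exact ⟨fun u v => (reach_b u).trans (reach_b v).symm⟩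

lemma isLeft_eq_of_isDisconn {S : Finset (α ⊕ β)} (h : IsDisconn (joinGraph G₁ G₂) S)
    {x y : α ⊕ β} (hx : x ∈ S) (hy : y ∈ S) : x.isLeft = y.isLeft := by
  rcases x with a | b <;> rcases y with a' | b'
  · rfl
  · exact (h (induce_connected_of_inl_mem_of_inr_mem (mem_coe.mpr hx) (mem_coe.mpr hy))).elim
  · exact (h (induce_connected_of_inl_mem_of_inr_mem (mem_coe.mpr hy) (mem_coe.mpr hx))).elim
  · rfl

end joinGraph

section Shelling

variable {V : Type*} [DecidableEq V]

def IsShellingStep (F G H : Finset V) : Prop :=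
  F ∩ G ⊆ H ∩ G ∧ (H ∩ G).card + 1 = G.card

lemma IsShellingStep.exists_mem_compl [Fintype V] {F G H : Finset V} (h : IsShellingStep F G H)
    (hH : 2 ≤ Hᶜ.card) : ∃ x ∈ Hᶜ, x ∈ Fᶜ ∧ ∃ y ∈ Hᶜ, y ∈ Gᶜ := by
  obtain ⟨hsub, hcard⟩ := h
  obtain ⟨x, hx⟩ : ∃ x, G \ H = {x} := card_eq_one.mp (by rw [card_sdiff]; omega)
  have hxG : x ∈ G ∧ x ∉ H := mem_sdiff.mp (hx ▸ mem_singleton_self x)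
  have hxF : x ∉ F := fun hxF => hxG.2 (mem_inter.mp (hsub (mem_inter.mpr ⟨hxF, hxG.1⟩))).1
  obtain ⟨y, hyH, hyx⟩ := exists_mem_ne (by omega : 1 < Hᶜ.card) x
  have hyG : y ∉ G := fun hyG =>
    hyx (mem_singleton.mp (hx ▸ mem_sdiff.mpr ⟨hyG, mem_compl.mp hyH⟩))
  exact ⟨x, mem_compl.mpr hxG.2, mem_compl.mpr hxF, y, hyH, mem_compl.mpr hyG⟩

lemma IsShelling.exists_isShellingStep {l : List (Finset V)} (hl : IsShelling l)
    {F G : Finset V} (hF : F ∈ l) (hG : G ∈ l) (hne : F ≠ G) :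
    ∃ H ∈ l, IsShellingStep F G H ∨ IsShellingStep G F H := by
  have step : ∀ i j (hi : i < l.length) (hj : j < l.length), i < j →
      ∃ H ∈ l, IsShellingStep l[i] l[j] H := by
    intro i j hi hj hij
    obtain ⟨m, hmj, hstep⟩ := hl i j hij hj
    have hm : m < l.length := hmj.trans hj
    rw [List.getD_eq_getElem _ _ hi, List.getD_eq_getElem _ _ hj,
      List.getD_eq_getElem _ _ hm] at hstep
    exact ⟨_, List.getElem_mem hm, hstep⟩
  obtain ⟨i, hi, rfl⟩ := List.mem_iff_getElem.mp hF
  obtain ⟨j, hj, rfl⟩ := List.mem_iff_getElem.mp hG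
  rcases lt_or_gt_of_ne (fun hij : i = j => hne (by simp only [hij])) with hij | hij
  · obtain ⟨H, hH, hstep⟩ := step i j hi hj hij
    exact ⟨H, hH, .inl hstep⟩
  · obtain ⟨H, hH, hstep⟩ := step j i hj hi hij
    exact ⟨H, hH, .inr hstep⟩

end Shelling

lemma joinGraph.not_isShellingStep {α β : Type*} [Fintype α] [Fintype β] [DecidableEq α]
    [DecidableEq β] {G₁ : SimpleGraph α} {G₂ : SimpleGraph β} {k : ℕ} (hk : 2 ≤ k)
    {F G H : Finset (α ⊕ β)} (hsides : ∀ x ∈ Fᶜ, ∀ y ∈ Gᶜ, x.isLeft ≠ y.isLeft)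
    (hH : IsFacet (joinGraph G₁ G₂) k H) : ¬ IsShellingStep F G H := fun hstep => by
  obtain ⟨x, hxH, hxF, y, hyH, hyG⟩ := hstep.exists_mem_compl (hH.1 ▸ hk)
  exact hsides x hxF y hyG (isLeft_eq_of_isDisconn hH.2 hxH hyH)

/-- If both `G₁` and `G₂` possess a disconnected `k`-set (so both
`Δ_k(G₁)` and `Δ_k(G₂)` have at least one facet), then `Δ_k(G₁ * G₂)` is not
shellable. -/
theorem stmt_5 {α β : Type*} [Fintype α] [Fintype β] [DecidableEq α] [DecidableEq β]
    (G₁ : SimpleGraph α) (G₂ : SimpleGraph β) (k : ℕ) (hk : 2 ≤ k)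
    (h₁ : ∃ S₁ : Finset α, S₁.card = k ∧ IsDisconn G₁ S₁)
    (h₂ : ∃ S₂ : Finset β, S₂.card = k ∧ IsDisconn G₂ S₂) :
    ¬ Shellable (IsFacet (joinGraph G₁ G₂) k) := by
  rintro ⟨l, -, hmem, hl⟩
  obtain ⟨S₁, hS₁, hdis₁⟩ := h₁
  obtain ⟨S₂, hS₂, hdis₂⟩ := h₂
  have hF₁ := isFacet_compl_map hS₁ hdis₁ (joinGraph.inlEmbedding G₁ G₂)
  have hF₂ := isFacet_compl_map hS₂ hdis₂ (joinGraph.inrEmbedding G₁ G₂)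
  set F₁ := (S₁.map (joinGraph.inlEmbedding G₁ G₂).toEmbedding)ᶜ
  set F₂ := (S₂.map (joinGraph.inrEmbedding G₁ G₂).toEmbedding)ᶜ
  have hsides : ∀ x ∈ F₁ᶜ, ∀ y ∈ F₂ᶜ, x.isLeft ≠ y.isLeft := by
    simp [F₁, F₂, joinGraph.inlEmbedding, joinGraph.inrEmbedding]
  have hne : F₁ ≠ F₂ := by
    obtain ⟨x, hx⟩ := card_pos.mp (hF₁.1 ▸ (by omega : 0 < k))
    exact fun h => hsides x hx x (h ▸ hx) rfl
  obtain ⟨H, hH, hstep | hstep⟩ :=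
    hl.exists_isShellingStep ((hmem _).mpr hF₁) ((hmem _).mpr hF₂) hne
  · exact joinGraph.not_isShellingStep hk hsides ((hmem H).mp hH) hstep
  · exact joinGraph.not_isShellingStep hk (fun y hy x hx => (hsides x hx y hy).symm)
      ((hmem H).mp hH) hstep
end

section
/- Let 1 ≤ m ≤ n and k ≥ 2 with m < k ≤ n. Then the k-cut complex Δ_k(K_{m,n}) of the complete bipartite graph K_{m,n} is a cone (every facet contains the entire side of size m), hence contractible. -/
open Finset

/-- Geometric realization of the simplicial complex with face predicate `K`:
the set of convex-combination weight functions supported on a face. -/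
noncomputable abbrev Realization {V : Type*} [Fintype V] (K : Finset V → Prop) : Type _ :=
  {f : V → ℝ // (∀ v, 0 ≤ f v) ∧ (∑ v, f v) = 1 ∧ ∃ σ : Finset V, K σ ∧ ∀ v, f v ≠ 0 → v ∈ σ}

/-! Any vertex set of `K_{α,β}` meeting both sides induces a connected graph, so a disconnected
`k`-set with `k > |α|` lies inside `β`. Hence adding a vertex of `α` to a face of `Δ_k` keeps it a
face, and the geometric realization is star-convex around that vertex. -/

section Realization

variable {V : Type*} [Fintype V]

def realizationSet (K : Finset V → Prop) : Set (V → ℝ) :=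
  {f | (∀ v, 0 ≤ f v) ∧ (∑ v, f v) = 1 ∧ ∃ σ : Finset V, K σ ∧ ∀ v, f v ≠ 0 → v ∈ σ}

variable [DecidableEq V] {K : Finset V → Prop}

theorem starConvex_realizationSet {v : V} (hK : ∀ σ, K σ → K (insert v σ)) :
    StarConvex ℝ (Pi.single v 1) (realizationSet K) := by
  rintro f ⟨hf₀, hf₁, σ, hσ, hfσ⟩ a b ha hb hab
  refine ⟨fun w => ?_, ?_, insert v σ, hK σ hσ, fun w hw => ?_⟩
  · have : (0 : ℝ) ≤ Pi.single (M := fun _ => ℝ) v 1 w := by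
      rcases eq_or_ne w v with rfl | h <;> simp [*]
    simp only [Pi.add_apply, Pi.smul_apply, smul_eq_mul]
    exact add_nonneg (mul_nonneg ha this) (mul_nonneg hb (hf₀ w))
  · simp [sum_add_distrib, ← mul_sum, hf₁, hab]
  · rcases eq_or_ne w v with rfl | h
    · exact mem_insert_self _ _
    · refine mem_insert_of_mem (hfσ w fun hw0 => hw ?_)
      simp [h, hw0]

theorem single_mem_realizationSet {v : V} {σ : Finset V} (hσ : K σ)
    (hK : ∀ σ, K σ → K (insert v σ)) : Pi.single v 1 ∈ realizationSet K := by
  refine ⟨fun w => ?_, by simp, insert v σ, hK σ hσ, fun w hw => ?_⟩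
  · rcases eq_or_ne w v with rfl | h <;> simp [*]
  · rcases eq_or_ne w v with rfl | h
    · exact mem_insert_self _ _
    · simp [h] at hw

theorem contractibleSpace_realization_of_cone {v : V} {σ : Finset V} (hσ : K σ)
    (hK : ∀ σ, K σ → K (insert v σ)) : ContractibleSpace (Realization K) :=
  (starConvex_realizationSet hK).contractibleSpace ⟨_, single_mem_realizationSet hσ hK⟩

end Realization

section CompleteBipartite

variable {α β : Type*}

theorem connected_induce_completeBipartiteGraph {S : Set (α ⊕ β)} {a : α} {b : β}
    (ha : Sum.inl a ∈ S) (hb : Sum.inr b ∈ S) :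
    ((completeBipartiteGraph α β).induce S).Connected := by
  have hb_reach : ∀ u : S, ((completeBipartiteGraph α β).induce S).Reachable u ⟨_, hb⟩ := by
    rintro ⟨u | u, hu⟩
    · exact SimpleGraph.Adj.reachable (Or.inl ⟨rfl, rfl⟩)
    · have hua : ((completeBipartiteGraph α β).induce S).Adj ⟨_, hu⟩ ⟨_, ha⟩ :=
        Or.inr ⟨rfl, rfl⟩
      have hab : ((completeBipartiteGraph α β).induce S).Adj ⟨_, ha⟩ ⟨_, hb⟩ :=
        Or.inl ⟨rfl, rfl⟩
      exact hua.reachable.trans hab.reachable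
  rw [SimpleGraph.connected_iff_exists_forall_reachable]
  exact ⟨_, fun u => (hb_reach u).symm⟩

theorem induce_completeBipartiteGraph_eq_bot_of_subset_range_inr {S : Set (α ⊕ β)}
    (hS : S ⊆ Set.range Sum.inr) : (completeBipartiteGraph α β).induce S = ⊥ := by
  ext ⟨x, hx⟩ ⟨y, hy⟩
  obtain ⟨c, rfl⟩ := hS hx
  obtain ⟨d, rfl⟩ := hS hy
  simp

theorem isDisconn_completeBipartiteGraph_map_inr {T : Finset β} (hT : 2 ≤ T.card) :
    IsDisconn (completeBipartiteGraph α β) (T.map .inr) := by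
  rw [IsDisconn, induce_completeBipartiteGraph_eq_bot_of_subset_range_inr (by simp),
    SimpleGraph.connected_bot_iff]
  rintro ⟨hsub, -⟩
  have hnt : (T.map (.inr : β ↪ α ⊕ β)).Nontrivial :=
    one_lt_card_iff_nontrivial.mp (by rw [card_map]; omega)
  exact hnt.not_subsingleton ((Set.subsingleton_coe _).mp hsub)

variable [Fintype α]

theorem inl_notMem_of_isDisconn_completeBipartiteGraph {S : Finset (α ⊕ β)}
    (hS : IsDisconn (completeBipartiteGraph α β) S) (hcard : Fintype.card α < S.card) (a : α) :
    Sum.inl a ∉ S := by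
  intro ha
  by_cases hb : ∃ b, Sum.inr b ∈ S
  · obtain ⟨b, hb⟩ := hb
    exact hS (connected_induce_completeBipartiteGraph ha hb)
  · have hsub : S ⊆ univ.map .inl := by
      rintro (x | x) hx
      · simp
      · exact absurd ⟨x, hx⟩ hb
    simpa using (card_le_card hsub).trans_lt' hcard

variable [Fintype β] [DecidableEq α] [DecidableEq β]

theorem isFace_completeBipartiteGraph_insert_inl {k : ℕ} (hk : Fintype.card α < k)
    {σ : Finset (α ⊕ β)} (hσ : IsFace (completeBipartiteGraph α β) k σ) (a : α) :
    IsFace (completeBipartiteGraph α β) k (insert (Sum.inl a) σ) := by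
  obtain ⟨S, hSσ, rfl, hS⟩ := hσ
  refine ⟨S, fun x hx => ?_, rfl, hS⟩
  rw [compl_insert, mem_erase]
  exact ⟨fun h => inl_notMem_of_isDisconn_completeBipartiteGraph hS hk a (h ▸ hx), hSσ hx⟩

theorem isFace_completeBipartiteGraph_empty {k : ℕ} (hk : 2 ≤ k) (hkβ : k ≤ Fintype.card β) :
    IsFace (completeBipartiteGraph α β) k ∅ := by
  obtain ⟨T, -, rfl⟩ := exists_subset_card_eq (s := (univ : Finset β)) hkβ
  exact ⟨T.map .inr, by simp, by simp, isDisconn_completeBipartiteGraph_map_inr hk⟩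

end CompleteBipartite

theorem stmt_6_general (m n k : ℕ) (hm : 1 ≤ m) (hk2 : 2 ≤ k)
    (hmk : m < k) (hkn : k ≤ n) :
    (∀ F : Finset (Fin m ⊕ Fin n),
      IsFacet (completeBipartiteGraph (Fin m) (Fin n)) k F →
        (Finset.univ.map (Function.Embedding.inl) : Finset (Fin m ⊕ Fin n)) ⊆ F) ∧
    ContractibleSpace
      (Realization (IsFace (completeBipartiteGraph (Fin m) (Fin n)) k)) := by
  have hcard : Fintype.card (Fin m) < k := by simpa using hmk
  refine ⟨fun F ⟨hFk, hF⟩ x hx => ?_, ?_⟩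
  · obtain ⟨a, -, rfl⟩ := mem_map.mp hx
    by_contra haF
    exact inl_notMem_of_isDisconn_completeBipartiteGraph hF (hFk ▸ hcard) a (mem_compl.mpr haF)
  · exact contractibleSpace_realization_of_cone (v := .inl ⟨0, hm⟩)
      (isFace_completeBipartiteGraph_empty hk2 (by simpa using hkn))
      (fun σ hσ => isFace_completeBipartiteGraph_insert_inl hcard hσ _)

/-- For `1 ≤ m ≤ n` and `2 ≤ k` with `m < k ≤ n`, every facet of
`Δ_k(K_{m,n})` contains the whole side of size `m` (the complex is a cone with
apex set that side), and hence the complex is contractible. -/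
theorem stmt_6 (m n k : ℕ) (hm : 1 ≤ m) (hmn : m ≤ n) (hk2 : 2 ≤ k)
    (hmk : m < k) (hkn : k ≤ n) :
    (∀ F : Finset (Fin m ⊕ Fin n),
      IsFacet (completeBipartiteGraph (Fin m) (Fin n)) k F →
        (Finset.univ.map (Function.Embedding.inl) : Finset (Fin m ⊕ Fin n)) ⊆ F) ∧
    ContractibleSpace
      (Realization (IsFace (completeBipartiteGraph (Fin m) (Fin n)) k)) :=
  stmt_6_general m n k hm hk2 hmk hkn
end

section
/- Let T be a tree on n vertices and let k ≥ 2 with k ≤ n - 1. Then every subset of the vertex set of T of size n - k - 1 is a face of Δ_k(T); that is, Δ_k(T) contains the complete (n-k-2)-skeleton of the simplex on V(T). More generally, this holds for any graph G with no cycles of length at most k+1. -/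
open Finset

open SimpleGraph

section

variable {V : Type*} {G : SimpleGraph V}

lemma isDisconn_of_forall_not_adj {S : Finset V} {a b : V} (ha : a ∈ S) (hb : b ∈ S)
    (hab : a ≠ b) (hiso : ∀ x ∈ S, ¬ G.Adj a x) : IsDisconn G S := by
  intro hconn
  obtain ⟨p⟩ := hconn.preconnected ⟨a, ha⟩ ⟨b, hb⟩
  have hp : ¬ p.Nil := Walk.not_nil_of_ne (by simpa using hab)
  exact hiso _ p.snd.2 (p.adj_snd hp)

lemma exists_isCycle_length_le_of_reachable_induce {S : Finset V} {v : V} (hv : v ∉ S)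
    {a b : (S : Set V)} (hab : a ≠ b) (hva : G.Adj v a) (hvb : G.Adj v b)
    (hreach : (G.induce (S : Set V)).Reachable a b) :
    ∃ (u : V) (c : G.Walk u u), c.IsCycle ∧ c.length ≤ S.card + 1 := by
  obtain ⟨q, hq⟩ := hreach.exists_isPath
  let f := (Embedding.induce (G := G) (S : Set V)).toHom
  have hvq : v ∉ (q.map f).support := by
    rw [Walk.support_map]
    simp [f, hv]
  have hlenq : (q.map f).length < S.card := by
    rw [Walk.length_map]
    simpa using hq.length_lt
  obtain ⟨p, hp, hvp, hlen⟩ :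
      ∃ p : G.Walk a b, p.IsPath ∧ v ∉ p.support ∧ p.length < S.card :=
    ⟨q.map f, hq.map Subtype.val_injective, hvq, hlenq⟩
  refine ⟨b, Walk.cons hvb.symm (Walk.cons hva p), ?_, by simp only [Walk.length_cons]; omega⟩
  refine (Walk.cons_isCycle_iff _ _).mpr ⟨hp.cons hvp, fun he => ?_⟩
  rcases List.mem_cons.mp (Walk.edges_cons hva p ▸ he) with he | he
  · rcases Sym2.eq_iff.mp he with ⟨hbv, -⟩ | ⟨hba, -⟩
    · exact hv (hbv ▸ b.2)
    · exact hab (Subtype.ext hba).symm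
  · exact hvp (p.snd_mem_support_of_mem_edges he)

/-- A vertex `a` of `T` either has two neighbours in `T`, and deleting `a` separates them since
`G[T]` is a forest, or it has at most one, and deleting that one isolates `a`. -/
lemma exists_isDisconn_erase [DecidableEq V] {T : Finset V} (hT : 3 ≤ T.card)
    (hgirth : ∀ (u : V) (c : G.Walk u u), c.IsCycle → T.card < c.length) :
    ∃ u ∈ T, IsDisconn G (T.erase u) := by
  obtain ⟨a, ha⟩ := card_pos.mp (by omega : 0 < T.card)
  by_cases htwo : ∃ b ∈ T, ∃ c ∈ T, b ≠ c ∧ G.Adj a b ∧ G.Adj a c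
  · obtain ⟨b, hb, c, hc, hbc, hab, hac⟩ := htwo
    have hbS : b ∈ T.erase a := mem_erase.mpr ⟨hab.ne.symm, hb⟩
    have hcS : c ∈ T.erase a := mem_erase.mpr ⟨hac.ne.symm, hc⟩
    refine ⟨a, ha, fun hconn => ?_⟩
    obtain ⟨u, cyc, hcyc, hlen⟩ := exists_isCycle_length_le_of_reachable_induce
      (notMem_erase a T) (a := ⟨b, hbS⟩) (b := ⟨c, hcS⟩) (by simpa using hbc) hab hac
      (hconn.preconnected _ _)
    have := hgirth u cyc hcyc
    rw [card_erase_of_mem ha] at hlen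
    omega
  · push Not at htwo
    obtain ⟨u, hu, hua, hnbr⟩ : ∃ u ∈ T, u ≠ a ∧ ∀ x ∈ T, G.Adj a x → x = u := by
      by_cases hnb : ∃ b ∈ T, G.Adj a b
      · obtain ⟨b, hb, hab⟩ := hnb
        exact ⟨b, hb, hab.ne.symm, fun x hx hax =>
          by_contra fun hxb => htwo b hb x hx (Ne.symm hxb) hab hax⟩
      · push Not at hnb
        obtain ⟨u, hu, hua⟩ := exists_mem_ne (by omega : 1 < T.card) a
        exact ⟨u, hu, hua, fun x hx hax => absurd hax (hnb x hx)⟩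
    have haS : a ∈ T.erase u := mem_erase.mpr ⟨hua.symm, ha⟩
    obtain ⟨b, hbS, hba⟩ := exists_mem_ne
      (by rw [card_erase_of_mem hu]; omega : 1 < (T.erase u).card) a
    refine ⟨u, hu, isDisconn_of_forall_not_adj haS hbS hba.symm fun x hx hax => ?_⟩
    exact ne_of_mem_erase hx (hnbr x (mem_of_mem_erase hx) hax)

end

/-- If a graph `G` on `n` vertices has no cycle of length at most
`k + 1` (in particular if `G` is a tree), and `2 ≤ k ≤ n - 1`, then every vertex
subset of size `n - k - 1` is a face of `Δ_k(G)`; that is, `Δ_k(G)` contains the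
complete `(n-k-2)`-skeleton of the simplex on the vertex set. -/
theorem stmt_9 {V : Type*} [Fintype V] [DecidableEq V] (G : SimpleGraph V) (n k : ℕ)
    (hn : Fintype.card V = n) (hk2 : 2 ≤ k) (hkn : k ≤ n - 1)
    (hgirth : ∀ (v : V) (w : G.Walk v v), w.IsCycle → k + 1 < w.length) :
    ∀ σ : Finset V, σ.card = n - k - 1 → IsFace G k σ := by
  intro σ hσ
  have hcard : σᶜ.card = k + 1 := by
    rw [card_compl, hσ, hn]
    omega
  obtain ⟨u, hu, hdisc⟩ := exists_isDisconn_erase (by omega) (hcard ▸ hgirth)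
  refine ⟨σᶜ.erase u, erase_subset u σᶜ, ?_, hdisc⟩
  rw [card_erase_of_mem hu, hcard]
  rfl
end

section
/- Let G be a graph on n vertices and k ≥ 2 such that Δ_k(G) contains the complete (n-k-2)-skeleton of the simplex on V(G). Let Z_k(G) be the number of k-subsets A of V(G) with G[A] connected. Then the reduced Euler characteristic of Δ_k(G) satisfies (-1)^{n-k-1} μ(Δ_k(G)) = C(n-1,k-1) - Z_k(G), where C(a,b) is the binomial coefficient and μ(Δ) = Σ_{i ≥ -1} (-1)^i f_i with f_i the number of i-dimensional faces (f_{-1} = 1). -/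
/-! Under the skeleton hypothesis a face of `Δ_k(G)` either has at most `m = n - k - 1`
vertices, or has `n - k` vertices and is then a facet, the complement of a disconnected
`k`-set. The full `(m - 1)`-dimensional skeleton contributes `-(-1)^m C(n-1, m)` by the
partial alternating sum of binomial coefficients, every facet contributes `(-1)^m`, and
`C(n, k) = #disconnected + #connected` together with Pascal's rule finishes the count. -/

open Finset

open Classical in
/-- The reduced Euler characteristic `μ(Δ) = ∑_{i ≥ -1} (-1)^i f_i` of the complex
with face predicate `K` (each face `σ` contributes `(-1)^(|σ|-1)`, with the empty
face contributing `(-1)^(-1) = -1`). -/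
noncomputable def redEuler {V : Type*} [Fintype V] [DecidableEq V]
    (K : Finset V → Prop) : ℤ :=
  ∑ σ : Finset V, if K σ then (-1 : ℤ) ^ (σ.card + 1) else 0

section ReducedEuler

variable {V : Type*} [Fintype V] [DecidableEq V]

theorem redEuler_eq_sum_filter (K : Finset V → Prop) [DecidablePred K] :
    redEuler K = ∑ σ ∈ univ.filter K, (-1) ^ (σ.card + 1) := by
  rw [redEuler, sum_filter]
  exact sum_congr rfl fun σ _ => by congr

theorem redEuler_or {K L : Finset V → Prop} (h : ∀ σ, K σ → ¬ L σ) :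
    redEuler (fun σ => K σ ∨ L σ) = redEuler K + redEuler L := by
  rw [redEuler, redEuler, redEuler, ← sum_add_distrib]
  refine sum_congr rfl fun σ _ => ?_
  by_cases hK : K σ
  · rw [if_pos (Or.inl hK), if_pos hK, if_neg (h σ hK), add_zero]
  by_cases hL : L σ
  · rw [if_pos (Or.inr hL), if_neg hK, if_pos hL, zero_add]
  · rw [if_neg (by tauto), if_neg hK, if_neg hL, add_zero]

theorem redEuler_of_card_eq {K : Finset V → Prop} {j : ℕ} (h : ∀ σ, K σ → σ.card = j) :
    redEuler K = (-1) ^ (j + 1) * {σ | K σ}.ncard := by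
  classical
  rw [redEuler_eq_sum_filter, sum_congr rfl fun σ hσ => by rw [h σ (mem_filter.1 hσ).2],
    sum_const, nsmul_eq_mul, mul_comm, Set.ncard_eq_toFinset_card', Set.toFinset_ofPred]

theorem redEuler_card_le {n : ℕ} (hn : Fintype.card V = n + 1) (m : ℕ) :
    redEuler (fun σ : Finset V => σ.card ≤ m) = -((-1) ^ m * n.choose m) := by
  have hlevel : ∀ j ∈ range (m + 1),
      filter (fun σ => σ.card = j) (filter (fun σ : Finset V => σ.card ≤ m) univ) =
        powersetCard j univ := by
    intro j hj
    ext σ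
    simp only [mem_filter, mem_univ, true_and, mem_powersetCard, subset_univ, mem_range] at hj ⊢
    omega
  rw [redEuler_eq_sum_filter, ← sum_fiberwise_of_maps_to (g := card) (t := range (m + 1))
    fun σ hσ => by simpa [Nat.lt_succ_iff] using hσ,
    ← Int.alternating_sum_range_choose_eq_choose, ← sum_neg_distrib]
  refine sum_congr rfl fun j hj => ?_
  rw [hlevel j hj, sum_congr rfl fun σ hσ => by rw [(mem_powersetCard.1 hσ).2], sum_const,
    card_powersetCard, card_univ, hn, nsmul_eq_mul]
  ring

end ReducedEuler

theorem ncard_card_eq_and_add_ncard_card_eq_and_not {V : Type*} [Fintype V]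
    (P : Finset V → Prop) (k : ℕ) :
    {A : Finset V | A.card = k ∧ P A}.ncard + {A : Finset V | A.card = k ∧ ¬ P A}.ncard =
      (Fintype.card V).choose k := by
  have hlevel : {A : Finset V | A.card = k} = ↑(powersetCard k (univ : Finset V)) := by
    ext A
    simp
  refine (Set.ncard_inter_add_ncard_sdiff_eq_ncard {A : Finset V | A.card = k} {A | P A}).trans ?_
  rw [hlevel, Set.ncard_coe_finset, card_powersetCard, card_univ]

section CutComplex

variable {V : Type*} [Fintype V] [DecidableEq V] {G : SimpleGraph V} {k : ℕ} {σ : Finset V}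

theorem IsFacet.card_add (h : IsFacet G k σ) : σ.card + k = Fintype.card V := by
  rw [← h.1, card_add_card_compl]

theorem IsFacet.isFace (h : IsFacet G k σ) : IsFace G k σ :=
  ⟨σᶜ, subset_rfl, h.1, h.2⟩

theorem IsFace.isFacet (h : IsFace G k σ) (hσ : Fintype.card V ≤ σ.card + k) :
    IsFacet G k σ := by
  obtain ⟨S, hSσ, hSk, hS⟩ := h
  have hS_eq : S = σᶜ := eq_of_subset_of_card_le hSσ (by rw [card_compl]; omega)
  exact ⟨hS_eq ▸ hSk, hS_eq ▸ hS⟩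

theorem isFace_eq_of_skeleton {m : ℕ} (hm : m + k + 1 = Fintype.card V)
    (hskel : ∀ σ : Finset V, σ.card ≤ m → IsFace G k σ) :
    IsFace G k = fun σ => σ.card ≤ m ∨ IsFacet G k σ := by
  ext σ
  refine ⟨fun h => ?_, ?_⟩
  · by_cases hσ : σ.card ≤ m
    exacts [Or.inl hσ, Or.inr (h.isFacet (by omega))]
  · rintro (hσ | hσ)
    exacts [hskel σ hσ, hσ.isFace]

theorem ncard_isFacet :
    {σ | IsFacet G k σ}.ncard = {A : Finset V | A.card = k ∧ IsDisconn G A}.ncard :=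
  Set.ncard_preimage_of_injective_subset_range (s := {A : Finset V | A.card = k ∧ IsDisconn G A})
    compl_injective fun A _ => ⟨Aᶜ, compl_compl A⟩

end CutComplex

/-- If `Δ_k(G)` contains the complete `(n-k-2)`-skeleton of the
simplex on the `n` vertices of `G`, then
`(-1)^(n-k-1) μ(Δ_k(G)) = C(n-1,k-1) - Z_k(G)`, where `Z_k(G)` is the number of
`k`-subsets inducing a connected subgraph. -/
theorem stmt_10 {V : Type*} [Fintype V] [DecidableEq V] (G : SimpleGraph V) (n k : ℕ)
    (hn : Fintype.card V = n) (hk2 : 2 ≤ k) (hkn : k ≤ n - 1)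
    (hskel : ∀ σ : Finset V, σ.card ≤ n - k - 1 → IsFace G k σ) :
    (-1 : ℤ) ^ (n - k - 1) * redEuler (IsFace G k) =
      ((n - 1).choose (k - 1) : ℤ) -
        ({A : Finset V | A.card = k ∧ ¬ IsDisconn G A}.ncard : ℤ) := by
  set m := n - k - 1
  have hc : n - 1 = k + m := by omega
  have hV : Fintype.card V = n - 1 + 1 := by omega
  have hμ : redEuler (IsFace G k) = -((-1) ^ m * (n - 1).choose m) +
      (-1) ^ (m + 1 + 1) * {A : Finset V | A.card = k ∧ IsDisconn G A}.ncard := by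
    rw [isFace_eq_of_skeleton (by omega) hskel,
      redEuler_or fun σ hσ hF => by have := hF.card_add; omega, redEuler_card_le hV,
      redEuler_of_card_eq (j := m + 1) fun σ hF => by have := hF.card_add; omega, ncard_isFacet]
  have hsplit : ({A : Finset V | A.card = k ∧ IsDisconn G A}.ncard : ℤ) +
      {A : Finset V | A.card = k ∧ ¬ IsDisconn G A}.ncard = (n - 1 + 1).choose k := by
    rw [← hV]
    exact_mod_cast ncard_card_eq_and_add_ncard_card_eq_and_not (IsDisconn G) k
  have hpascal : ((n - 1 + 1).choose k : ℤ) = (n - 1).choose (k - 1) + (n - 1).choose m := by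
    obtain ⟨j, rfl⟩ : ∃ j, k = j + 1 := ⟨k - 1, by omega⟩
    rw [Nat.choose_succ_succ, hc, Nat.choose_symm_add]
    push_cast
    ring
  have hsq : (-1 : ℤ) ^ m * (-1) ^ m = 1 := by
    rw [← pow_add]
    exact Even.neg_one_pow ⟨m, rfl⟩
  rw [hμ]
  linear_combination ((({A : Finset V | A.card = k ∧ IsDisconn G A}.ncard : ℕ) : ℤ) -
    (n - 1).choose m) * hsq + hsplit + hpascal
end

section
/- Let F be a forest on n vertices with c connected components, and let k = 2 ≤ n - 1. Then the number of facets of Δ_2(F) is C(n,2) - (n - c), and the reduced Euler characteristic of Δ_2(F) is (-1)^{n-3}(c-1). In particular, if F is a tree (c = 1), Δ_2(F) has reduced Euler characteristic 0. -/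
/-! A forest is triangle-free, so every set of at least three vertices contains a non-adjacent
pair. Hence `Δ_2(F)` contains every set of size at most `n - 3`, and its faces of size `n - 2` are
exactly its facets, the complements of the `C(n,2) - (n - c)` non-edges; a forest has `n - c` edges
because deleting an edge, always a bridge, raises the number of components by one. The subsets of
size at most `n - 3` contribute `(-1)^n C(n-1,2)` to `μ` (a partial alternating binomial sum) and
the facets `(-1)^(n-3) (C(n-1,2) + c - 1)`, which add up to `(-1)^(n-3) (c - 1)`. -/

open Finset

lemma Sym2.toFinset_injective {α : Type*} [DecidableEq α] :
    Function.Injective (Sym2.toFinset : Sym2 α → Finset α) :=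
  fun _ _ h ↦ Sym2.ext fun x ↦ by rw [← Sym2.mem_toFinset, h, Sym2.mem_toFinset]

namespace SimpleGraph

variable {V : Type*} {G : SimpleGraph V}

lemma induce_pair_connected_iff {u v : V} (huv : u ≠ v) :
    (G.induce {u, v}).Connected ↔ G.Adj u v := by
  refine ⟨fun h ↦ ?_, induce_pair_connected_of_adj⟩
  have : Nontrivial ({u, v} : Set V) := ⟨⟨u, by simp⟩, ⟨v, by simp⟩, by simpa using huv⟩
  obtain ⟨⟨w, hw⟩, huw⟩ := h.preconnected.exists_adj_of_nontrivial ⟨u, by simp⟩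
  obtain rfl | rfl := hw
  · exact absurd huw (SimpleGraph.irrefl _)
  · exact huw

lemma Reachable.deleteEdges_or {a b : V} (u v : V) (h : G.Reachable a b) :
    (G.deleteEdges {s(u, v)}).Reachable a b ∨
      (G.deleteEdges {s(u, v)}).Reachable a u ∧ (G.deleteEdges {s(u, v)}).Reachable v b ∨
      (G.deleteEdges {s(u, v)}).Reachable a v ∧ (G.deleteEdges {s(u, v)}).Reachable u b := by
  obtain ⟨p⟩ := h
  induction p with
  | nil => exact .inl .rfl
  | @cons a x b hax p ih =>
    by_cases he : s(a, x) = s(u, v)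
    · obtain ⟨rfl, rfl⟩ | ⟨rfl, rfl⟩ := Sym2.eq_iff.mp he
      · rcases ih with h | ⟨h₁, h₂⟩ | ⟨-, h₂⟩
        · exact .inr (.inl ⟨.rfl, h⟩)
        · exact .inl (h₁.symm.trans h₂)
        · exact .inl h₂
      · rcases ih with h | ⟨-, h₂⟩ | ⟨h₁, h₂⟩
        · exact .inr (.inr ⟨.rfl, h⟩)
        · exact .inl h₂
        · exact .inl (h₁.symm.trans h₂)
    · have hax' : (G.deleteEdges {s(u, v)}).Adj a x := deleteEdges_adj.mpr ⟨hax, he⟩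
      rcases ih with h | ⟨h₁, h₂⟩ | ⟨h₁, h₂⟩
      · exact .inl (hax'.reachable.trans h)
      · exact .inr (.inl ⟨hax'.reachable.trans h₁, h₂⟩)
      · exact .inr (.inr ⟨hax'.reachable.trans h₁, h₂⟩)

lemma card_connectedComponent_deleteEdges_of_isBridge [Finite V] {u v : V} (huv : G.Adj u v)
    (hb : G.IsBridge s(u, v)) :
    Nat.card (G.deleteEdges {s(u, v)}).ConnectedComponent = Nat.card G.ConnectedComponent + 1 := by
  classical
  set G' := G.deleteEdges {s(u, v)}
  have hle : G' ≤ G := deleteEdges_le _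
  have hbij : Function.Bijective fun C : {C // C ≠ G'.connectedComponentMk v} ↦
      ConnectedComponent.map (Hom.ofLE hle) C.1 := by
    refine ⟨?_, fun C ↦ ?_⟩
    · rintro ⟨C, hC⟩ ⟨D, hD⟩ hCD
      induction C using ConnectedComponent.ind with | h a =>
      induction D using ConnectedComponent.ind with | h b =>
      rcases (ConnectedComponent.exact hCD).deleteEdges_or u v with h | ⟨-, h⟩ | ⟨h, -⟩
      · exact Subtype.ext (ConnectedComponent.sound h)
      · exact absurd (ConnectedComponent.sound h.symm) hD
      · exact absurd (ConnectedComponent.sound h) hC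
    · induction C using ConnectedComponent.ind with | h w =>
      by_cases hvw : G'.Reachable v w
      · exact ⟨⟨G'.connectedComponentMk u, fun h ↦ hb (ConnectedComponent.exact h)⟩,
          ConnectedComponent.sound (huv.reachable.trans (hvw.mono hle))⟩
      · exact ⟨⟨G'.connectedComponentMk w, fun h ↦ hvw (ConnectedComponent.exact h).symm⟩,
          rfl⟩
  rw [← Nat.card_congr (Equiv.optionSubtypeNe (G'.connectedComponentMk v)), Finite.card_option,
    Nat.card_eq_of_bijective _ hbij]

theorem IsAcyclic.ncard_edgeSet_add_card_connectedComponent [Finite V] (hG : G.IsAcyclic) :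
    G.edgeSet.ncard + Nat.card G.ConnectedComponent = Nat.card V := by
  induction h : G.edgeSet.ncard generalizing G with
  | zero =>
    obtain rfl : G = ⊥ := edgeSet_eq_empty.mp ((Set.ncard_eq_zero (Set.toFinite _)).mp h)
    rw [zero_add, eq_comm]
    exact Nat.card_eq_of_bijective _
      ⟨fun a b hab ↦ reachable_bot.mp (ConnectedComponent.exact hab), Quot.mk_surjective⟩
  | succ k ih =>
    obtain ⟨⟨u, v⟩, he⟩ : G.edgeSet.Nonempty := Set.nonempty_of_ncard_ne_zero (by omega)
    have hk := ih (hG.anti (deleteEdges_le _))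
      (by rw [edgeSet_deleteEdges, Set.ncard_sdiff_singleton_of_mem he, h, Nat.add_sub_cancel])
    rw [card_connectedComponent_deleteEdges_of_isBridge he
      (isAcyclic_iff_forall_adj_isBridge.mp hG he)] at hk
    omega

end SimpleGraph

lemma sum_neg_one_pow_card_of_card_le {V : Type*} [Fintype V] {n : ℕ}
    (hV : Fintype.card V = n + 1) (m : ℕ) :
    ∑ σ : Finset V with #σ ≤ m, (-1 : ℤ) ^ #σ = (-1) ^ m * n.choose m := by
  rw [← Int.alternating_sum_range_choose_eq_choose, ← hV]
  simp_rw [← Nat.lt_succ_iff, ← mem_range, ← sum_fiberwise_eq_sum_filter, univ_filter_card_eq]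
  refine sum_congr rfl fun j _ ↦ ?_
  rw [sum_congr rfl fun σ hσ ↦ by rw [mem_powersetCard_univ.mp hσ], sum_const,
    card_powersetCard, card_univ, nsmul_eq_mul, mul_comm]

open Classical in
lemma redEuler_eq_of_isFace_iff {V : Type*} [Fintype V] [DecidableEq V] {m : ℕ}
    (hV : Fintype.card V = m + 3) (K Fac : Finset V → Prop) (hFac : ∀ σ, Fac σ → #σᶜ = 2)
    (hK : ∀ σ, K σ ↔ 3 ≤ #σᶜ ∨ Fac σ) :
    redEuler K = (-1) ^ m * ({σ | Fac σ}.ncard - (m + 2).choose 2 : ℤ) := by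
  have hcompl : ∀ σ : Finset V, #σᶜ = m + 3 - #σ := fun σ ↦ by rw [card_compl, hV]
  have hsplit : redEuler K = ∑ σ : Finset V with #σ ≤ m, -(-1 : ℤ) ^ #σ +
      ∑ σ : Finset V with Fac σ, (-1 : ℤ) ^ (#σ + 1) := by
    rw [redEuler, sum_filter, sum_filter, ← sum_add_distrib]
    refine sum_congr rfl fun σ _ ↦ ?_
    have h3 : 3 ≤ #σᶜ ↔ #σ ≤ m := by rw [hcompl]; omega
    have hF : Fac σ → ¬#σ ≤ m := fun h ↦ by have := hFac σ h; omega
    by_cases hσ : #σ ≤ m <;> simp [hK, h3, hσ, pow_succ, mt hF]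
  have hfacet_sign : ∀ σ ∈ ({σ | Fac σ} : Finset (Finset V)),
      (-1 : ℤ) ^ (#σ + 1) = (-1) ^ m := fun σ hσ ↦ by
    have := hcompl σ
    rw [hFac σ (mem_filter.mp hσ).2] at this
    rw [show #σ + 1 = m + 2 by omega, pow_add, neg_one_sq, mul_one]
  rw [hsplit, sum_neg_distrib, sum_neg_one_pow_card_of_card_le (n := m + 2) hV,
    sum_congr rfl hfacet_sign, sum_const, nsmul_eq_mul, ← Nat.choose_symm_add,
    Set.ncard_eq_toFinset_card', Set.toFinset_ofPred]
  ring

lemma isDisconn_pair_iff {V : Type*} [DecidableEq V] {G : SimpleGraph V} {u v : V} (huv : u ≠ v) :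
    IsDisconn G {u, v} ↔ ¬G.Adj u v := by
  rw [IsDisconn, coe_pair, G.induce_pair_connected_iff huv]

lemma exists_isDisconn_pair_subset {V : Type*} [DecidableEq V] {G : SimpleGraph V}
    (hG : G.CliqueFree 3) {T : Finset V} (hT : 3 ≤ #T) :
    ∃ S ⊆ T, #S = 2 ∧ IsDisconn G S := by
  by_contra! h
  have hclique : G.IsClique (T : Set V) := fun x hx y hy hxy ↦ by
    by_contra hn
    exact h {x, y} (insert_subset hx (singleton_subset_iff.mpr hy)) (card_pair hxy)
      ((isDisconn_pair_iff hxy).mpr hn)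
  obtain ⟨T', hT', hcard⟩ := exists_subset_card_eq hT
  exact hG T' ⟨hclique.subset (coe_subset.mpr hT'), hcard⟩

section CutComplex

variable {V : Type*} [Fintype V] [DecidableEq V] (G : SimpleGraph V)

open Classical in
lemma card_connected_pairs_eq_ncard_edgeSet :
    #{S : Finset V | #S = 2 ∧ ¬IsDisconn G S} = G.edgeSet.ncard := by
  rw [← Set.ncard_image_of_injective _ Sym2.toFinset_injective, ← Set.ncard_coe_finset]
  congr 1
  ext S
  simp only [coe_filter, mem_univ, true_and, Set.mem_image]
  constructor
  · rintro ⟨hS, hconn⟩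
    obtain ⟨x, y, hxy, rfl⟩ := card_eq_two.mp hS
    exact ⟨s(x, y), of_not_not ((isDisconn_pair_iff hxy).not.mp hconn), Sym2.toFinset_mk_eq⟩
  · rintro ⟨e, he, rfl⟩
    induction e with | h x y =>
    rw [Sym2.toFinset_mk_eq]
    exact ⟨card_pair (G.ne_of_adj he), fun h ↦ (isDisconn_pair_iff (G.ne_of_adj he)).mp h he⟩

open Classical in
lemma card_disconnected_pairs_add_ncard_edgeSet :
    #{S : Finset V | #S = 2 ∧ IsDisconn G S} + G.edgeSet.ncard = (Fintype.card V).choose 2 := by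
  rw [← card_connected_pairs_eq_ncard_edgeSet, ← filter_filter, ← filter_filter,
    card_filter_add_card_filter_not, univ_filter_card_eq, card_powersetCard, card_univ]

open Classical in
lemma ncard_setOf_isFacet (k : ℕ) :
    {F | IsFacet G k F}.ncard = #{S : Finset V | #S = k ∧ IsDisconn G S} := by
  rw [Set.ncard_eq_toFinset_card', Set.toFinset_ofPred]
  exact card_nbij' compl compl (fun F hF ↦ by simpa [IsFacet, Set.mem_ofPred] using hF)
    (fun S hS ↦ by simpa [IsFacet, Set.mem_ofPred] using hS) (fun F _ ↦ compl_compl F)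
    (fun S _ ↦ compl_compl S)

variable {G} in
lemma isFace_two_iff (hG : G.CliqueFree 3) (σ : Finset V) :
    IsFace G 2 σ ↔ 3 ≤ #σᶜ ∨ IsFacet G 2 σ := by
  refine ⟨fun ⟨S, hS, hcard, hdis⟩ ↦ ?_, ?_⟩
  · by_cases h3 : 3 ≤ #σᶜ
    · exact .inl h3
    · obtain rfl : S = σᶜ := eq_of_subset_of_card_le hS (by omega)
      exact .inr ⟨hcard, hdis⟩
  · rintro (h3 | ⟨hcard, hdis⟩)
    · exact exists_isDisconn_pair_subset hG h3
    · exact ⟨σᶜ, subset_rfl, hcard, hdis⟩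

end CutComplex

/-- For a forest `F` on `n ≥ 3` vertices with `c` connected
components, the number of facets of `Δ_2(F)` is `C(n,2) - (n - c)`, and the
reduced Euler characteristic of `Δ_2(F)` is `(-1)^(n-3)(c-1)`. In particular, for
a tree (`c = 1`) it is `0`. -/
theorem stmt_11 {V : Type*} [Fintype V] [DecidableEq V] (G : SimpleGraph V) (n c : ℕ)
    (hn : Fintype.card V = n) (hacyclic : G.IsAcyclic)
    (hc : c = Nat.card G.ConnectedComponent) (hn3 : 3 ≤ n) :
    {F : Finset V | IsFacet G 2 F}.ncard = n.choose 2 - (n - c) ∧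
    redEuler (IsFace G 2) = (-1 : ℤ) ^ (n - 3) * ((c : ℤ) - 1) := by
  classical
  obtain ⟨m, rfl⟩ : ∃ m, n = m + 3 := ⟨n - 3, by omega⟩
  have hforest := hacyclic.ncard_edgeSet_add_card_connectedComponent
  rw [Nat.card_eq_fintype_card (α := V), hn, ← hc] at hforest
  have hpairs := card_disconnected_pairs_add_ncard_edgeSet G
  rw [hn] at hpairs
  have hEuler := redEuler_eq_of_isFace_iff hn (IsFace G 2) (IsFacet G 2) (fun _ h ↦ h.1)
    (isFace_two_iff (hacyclic.cliqueFree le_rfl))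
  rw [ncard_setOf_isFacet] at hEuler ⊢
  refine ⟨by omega, ?_⟩
  have hchoose : (m + 3).choose 2 = (m + 2).choose 2 + (m + 2) := by
    rw [Nat.choose_succ_succ', Nat.choose_one_right, add_comm]
  rw [hEuler, Nat.add_sub_cancel]
  congr 1
  omega
end

section
/- For all n and k with 3 ≤ k ≤ n - 1, the k-cut complex Δ_k(C_n) of the cycle graph C_n on n vertices is shellable; an explicit shelling is given by ordering the facets (identified with increasing sequences of their vertices in [n]) lexicographically. -/
open Finset

/-- The cycle graph `C_n` on the vertex set `Fin n` (vertices in cyclic order). -/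
def cycleF (n : ℕ) : SimpleGraph (Fin n) where
  Adj x y := x ≠ y ∧ ((x.val + 1) % n = y.val ∨ (y.val + 1) % n = x.val)
  symm := by
    constructor
    intro x y h
    exact ⟨h.1.symm, h.2.symm⟩
  loopless := by
    constructor
    intro x h
    exact h.1 rfl

/-!
A set of vertices of `C_n` induces a connected subgraph iff it is a cyclic interval (an arc), and
the complement of an arc is an arc, so the facets of `Δ_k(C_n)` are the `(n - k)`-sets that are
not arcs. Let `F' < F` be facets in lexicographic order, `a₀` the least element of their symmetric
difference (it lies in `F' \ F`) and `b₁` the largest element of `F \ F'`. For `b ∈ F \ F'`, the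
set `F - b + a₀` precedes `F` and contains `F' ∩ F`, so it is the required facet unless it is an
arc. If it is an arc for `b = b₁`, then `F \ F'` has a second element `b₂` (otherwise `F'` would be
that arc). If it is an arc for `b₂` as well, comparing the two arcs shows that `F` is the cyclic
interval running from `b₁` past `n` to `b₂`, with one point removed; then `F - b₁ + (b₂ + 2)`
is not an arc, because `b₂ + 1` is missing from it.
-/

open Fin.NatCast

namespace Finset

variable {α : Type*} [DecidableEq α]

theorem card_insert_erase {s : Finset α} {a b : α} (ha : a ∉ s) (hb : b ∈ s) :
    (insert a (s.erase b)).card = s.card := by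
  rw [card_insert_of_notMem (by simp [ha]), card_erase_add_one hb]

theorem eq_insert_erase_of_sdiff_subset {s t : Finset α} {a b : α} (hcard : t.card = s.card)
    (ha : a ∈ t) (ha' : a ∉ s) (hb : b ∈ s) (h : s \ t ⊆ {b}) : t = insert a (s.erase b) := by
  refine (eq_of_subset_of_card_le (fun y hy => ?_) (by rw [card_insert_erase ha' hb, hcard])).symm
  rcases mem_insert.mp hy with rfl | hy
  · exact ha
  · by_contra hyt
    exact (mem_erase.mp hy).1 (mem_singleton.mp (h (mem_sdiff.mpr ⟨(mem_erase.mp hy).2, hyt⟩)))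

end Finset

section Lex

variable {α : Type*} [LinearOrder α]

theorem List.lt_iff_exists_min_mem_of_pairwise :
    ∀ {l₁ l₂ : List α}, l₁.Pairwise (· < ·) → l₂.Pairwise (· < ·) → l₁.length = l₂.length →
      (l₁ < l₂ ↔ ∃ a ∈ l₁, a ∉ l₂ ∧ ∀ y < a, (y ∈ l₁ ↔ y ∈ l₂))
  | [], [], _, _, _ => by simp
  | a :: l₁, b :: l₂, h₁, h₂, hlen => by
    rw [List.pairwise_cons] at h₁ h₂
    have ih := lt_iff_exists_min_mem_of_pairwise h₁.2 h₂.2 (by simpa using hlen)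
    rcases lt_trichotomy a b with hab | rfl | hab
    · exact iff_of_true (List.Lex.rel hab) ⟨a, by grind⟩
    · rw [show (a :: l₁ < a :: l₂) ↔ l₁ < l₂ from List.lex_cons_iff, ih]
      grind
    · refine iff_of_false (fun h => ?_) ?_
      · cases h <;> grind
      · grind

theorem Finset.sort_lt_sort_iff {s t : Finset α} (h : s.card = t.card) :
    s.sort (· ≤ ·) < t.sort (· ≤ ·) ↔ ∃ a ∈ s, a ∉ t ∧ ∀ y < a, (y ∈ s ↔ y ∈ t) := by
  rw [List.lt_iff_exists_min_mem_of_pairwise s.sortedLT_sort.pairwise t.sortedLT_sort.pairwise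
    (by simp [h])]
  simp only [Finset.mem_sort]

theorem Finset.sort_injective : Function.Injective fun s : Finset α => s.sort (· ≤ ·) :=
  fun s t h => by rw [← s.sort_toFinset (· ≤ ·), ← t.sort_toFinset (· ≤ ·)]; exact congrArg _ h

theorem Finset.sort_insert_erase_lt {s : Finset α} {a b : α} (ha : a ∉ s) (hb : b ∈ s)
    (hab : a < b) : (insert a (s.erase b)).sort (· ≤ ·) < s.sort (· ≤ ·) := by
  rw [Finset.sort_lt_sort_iff (card_insert_erase ha hb)]
  refine ⟨a, mem_insert_self _ _, ha, fun y hy => ?_⟩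
  simp [hy.ne, (hy.trans hab).ne]

noncomputable def lexList (s : Finset (Finset α)) : List (Finset α) :=
  s.toList.mergeSort fun A B => decide (A.sort (· ≤ ·) ≤ B.sort (· ≤ ·))

theorem mem_lexList {s : Finset (Finset α)} {A : Finset α} : A ∈ lexList s ↔ A ∈ s := by
  simp [lexList, (List.mergeSort_perm _ _).mem_iff]

theorem nodup_lexList (s : Finset (Finset α)) : (lexList s).Nodup :=
  (List.mergeSort_perm _ _).nodup_iff.mpr s.nodup_toList

theorem pairwise_lexList (s : Finset (Finset α)) :
    (lexList s).Pairwise fun A B => A.sort (· ≤ ·) < B.sort (· ≤ ·) := by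
  have hle := List.pairwise_mergeSort (l := s.toList)
    (le := fun A B => decide (A.sort (· ≤ ·) ≤ B.sort (· ≤ ·)))
    (fun _ _ _ h₁ h₂ => by simp only [decide_eq_true_eq] at *; exact h₁.trans h₂)
    (fun A B => by simpa using le_total _ _)
  refine (hle.and (nodup_lexList s)).imp fun ⟨h, hne⟩ =>
    (of_decide_eq_true h).lt_of_ne (Finset.sort_injective.ne hne)

end Lex

theorem isShelling_of_pairwise {V : Type*} [DecidableEq V] {l : List (Finset V)}
    {r : Finset V → Finset V → Prop} (hr : ∀ A B, r A B → ¬r B A) (hl : l.Pairwise r)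
    (hstep : ∀ F' ∈ l, ∀ F ∈ l, r F' F →
      ∃ G ∈ l, r G F ∧ F' ∩ F ⊆ G ∩ F ∧ (G ∩ F).card + 1 = F.card) :
    IsShelling l := by
  intro i j hij hj
  have hi := hij.trans hj
  obtain ⟨G, hG, hGF, hsub, hcard⟩ := hstep _ (l.getElem_mem hi) _ (l.getElem_mem hj)
    (List.pairwise_iff_getElem.mp hl i j hi hj hij)
  have hm : l.idxOf G < l.length := List.idxOf_lt_length_iff.mpr hG
  have hlm : l[l.idxOf G] = G := List.getElem_idxOf hm
  refine ⟨l.idxOf G, ?_, ?_⟩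
  · by_contra! hjm
    rcases hjm.eq_or_lt with hjm | hjm
    · have hGj : l[j] = G := by simp only [hjm, hlm]
      rw [hGj] at hGF
      exact hr _ _ hGF hGF
    · exact hr _ _ hGF (hlm ▸ List.pairwise_iff_getElem.mp hl j _ hj hm hjm)
  · simp only [List.getD_eq_getElem _ _ hi, List.getD_eq_getElem _ _ hj,
      List.getD_eq_getElem _ _ hm, hlm]
    exact ⟨hsub, hcard⟩

section Arc

variable {n : ℕ}

theorem Fin.val_sub_eq_ite (a b : Fin n) :
    (a - b).val = if b ≤ a then a.val - b.val else n + a.val - b.val := by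
  split_ifs with h
  · exact Fin.coe_sub_iff_le.mpr h
  · exact Fin.coe_sub_iff_lt.mpr (not_le.mp h)

theorem Fin.val_add_one_eq_ite [NeZero n] (a : Fin n) :
    (a + 1).val = if a.val + 1 = n then 0 else a.val + 1 := by
  rw [Fin.val_add, Fin.val_one', Nat.add_mod_mod]
  split_ifs with h
  · rw [h, Nat.mod_self]
  · exact Nat.mod_eq_of_lt (by omega)

theorem Fin.val_add_one_sub_eq_ite [NeZero n] (x y : Fin n) :
    (y + 1 - x).val = if (y - x).val + 1 = n then 0 else (y - x).val + 1 := by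
  rw [add_sub_right_comm, Fin.val_add_one_eq_ite]

/-- The cyclic interval `{x, x + 1, …, x + (m - 1)}`. -/
def arc (x : Fin n) (m : ℕ) : Finset (Fin n) := univ.filter fun y => (y - x).val < m

@[simp]
theorem mem_arc {x y : Fin n} {m : ℕ} : y ∈ arc x m ↔ (y - x).val < m := by simp [arc]

theorem card_arc [NeZero n] (x : Fin n) {m : ℕ} (hm : m ≤ n) : (arc x m).card = m := by
  have : arc x m = (univ.filter fun z : Fin n => z.val < m).map (addLeftEmbedding x) := by
    ext y
    simp only [mem_arc, mem_map, mem_filter, mem_univ, true_and, addLeftEmbedding_apply]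
    refine ⟨fun h => ⟨y - x, h, add_sub_cancel x y⟩, ?_⟩
    rintro ⟨a, ha, rfl⟩
    rwa [add_sub_cancel_left]
  rw [this, card_map, Fin.card_filter_val_lt, min_eq_right hm]

theorem compl_arc [NeZero n] (x : Fin n) {m : ℕ} (hm : m ≤ n) :
    (arc x m)ᶜ = arc (x + (m : Fin n)) (n - m) := by
  ext y
  have hz := (y - x).isLt
  rcases hm.lt_or_eq with hm | rfl
  · have hmv : (m : Fin n).val = m := Fin.val_cast_of_lt hm
    rw [mem_compl, mem_arc, mem_arc, ← sub_sub, Fin.val_sub_eq_ite (y - x)]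
    simp only [Fin.le_def, hmv]
    split_ifs <;> omega
  · simp [hz]

def IsArc (S : Finset (Fin n)) : Prop := ∃ x, S = arc x S.card

theorem IsArc.compl [NeZero n] {S : Finset (Fin n)} (h : IsArc S) : IsArc Sᶜ := by
  obtain ⟨x, hx⟩ := h
  refine ⟨x + (S.card : Fin n), ?_⟩
  rw [card_compl, Fintype.card_fin]
  conv_lhs => rw [hx]
  exact compl_arc x (card_le_univ S |>.trans_eq (Fintype.card_fin n))

theorem two_le_card_of_not_isArc [NeZero n] {S : Finset (Fin n)} (h : ¬IsArc S) : 2 ≤ S.card := by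
  by_contra! hS
  interval_cases hc : S.card
  · exact h ⟨0, by ext; simp_all⟩
  · obtain ⟨y, rfl⟩ := card_eq_one.mp hc
    refine h ⟨y, ?_⟩
    ext z
    simp [Fin.val_eq_zero_iff, sub_eq_zero]

theorem val_sub_add_one_of_mem_arc [NeZero n] {x y : Fin n} {m : ℕ} (hy : y ∈ arc x m)
    (hy' : y + 1 ∉ arc x m) : (y - x).val + 1 = m := by
  rw [mem_arc] at hy hy'
  rw [Fin.val_add_one_sub_eq_ite] at hy'
  split_ifs at hy' <;> omega

theorem IsArc.eq_of_add_one_notMem [NeZero n] {S : Finset (Fin n)} (hS : IsArc S) {y z : Fin n}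
    (hy : y ∈ S) (hy' : y + 1 ∉ S) (hz : z ∈ S) (hz' : z + 1 ∉ S) : y = z := by
  obtain ⟨x, hx⟩ := hS
  rw [hx] at hy hy' hz hz'
  have h := (val_sub_add_one_of_mem_arc hy hy').trans (val_sub_add_one_of_mem_arc hz hz').symm
  exact sub_left_inj.mp (Fin.ext (Nat.succ_injective h))

end Arc

section Swap

variable {n : ℕ} [NeZero n]

/-- Replacing one point `b` of an arc of length `d` by an outside point `b'` gives an arc only when
the arc is shifted by one step: either `b` is the first point and `b'` the successor of the last,
or `b` is the last point and `b'` the predecessor of the first. -/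
theorem eq_of_isArc_insert_erase_arc {x b b' : Fin n} {d : ℕ} (hd : 2 ≤ d) (hdn : d + 2 ≤ n)
    (hb : b ∈ arc x d) (hb' : b' ∉ arc x d) (h : IsArc (insert b' ((arc x d).erase b))) :
    ((b - x).val = 0 ∧ (b' - x).val = d) ∨ ((b - x).val = d - 1 ∧ (b' - x).val = n - 1) := by
  set A := insert b' ((arc x d).erase b)
  have hmem : ∀ y, y ∈ A ↔
      (y - x).val = (b' - x).val ∨ ((y - x).val ≠ (b - x).val ∧ (y - x).val < d) := by
    intro y
    simp only [A, mem_insert, mem_erase, mem_arc, Fin.val_inj, sub_left_inj, ne_eq]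
  have hpt (i : ℕ) (hi : i < n) : ∃ y : Fin n, (y - x).val = i :=
    ⟨x + i, by rw [add_sub_cancel_left, Fin.val_cast_of_lt hi]⟩
  have hend {y z : Fin n} (hy : y ∈ A) (hy' : y + 1 ∉ A) (hz : z ∈ A) (hz' : z + 1 ∉ A) :
      (y - x).val = (z - x).val := by
    rw [h.eq_of_add_one_notMem hy hy' hz hz']
  rw [mem_arc] at hb hb'
  have hs := (b' - x).isLt
  obtain ⟨e, he⟩ := hpt (d - 1) (by omega)
  by_cases hr : (b - x).val = 0
  · refine Or.inl ⟨hr, ?_⟩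
    by_contra hs'
    have := hend (y := e) (z := b') (by rw [hmem, he]; omega)
      (by rw [hmem, Fin.val_add_one_sub_eq_ite, he]; split_ifs <;> omega) (by rw [hmem]; omega)
      (by rw [hmem, Fin.val_add_one_sub_eq_ite]; split_ifs <;> omega)
    omega
  · right
    obtain ⟨p, hp⟩ := hpt ((b - x).val - 1) (by omega)
    have hp_mem : p ∈ A := by rw [hmem, hp]; omega
    have hp_end : p + 1 ∉ A := by rw [hmem, Fin.val_add_one_sub_eq_ite, hp]; split_ifs <;> omega
    have hs' : (b' - x).val = n - 1 := by
      by_contra hs'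
      have := hend hp_mem hp_end (z := b') (by rw [hmem]; omega)
        (by rw [hmem, Fin.val_add_one_sub_eq_ite]; split_ifs <;> omega)
      omega
    refine ⟨?_, hs'⟩
    by_contra hr'
    have := hend hp_mem hp_end (z := e) (by rw [hmem, he]; omega)
      (by rw [hmem, Fin.val_add_one_sub_eq_ite, he]; split_ifs <;> omega)
    omega

/-- `F` lies in the cyclic interval from `b` to `b'`; swapping `b` for `b' + 2` leaves the gap
`b' + 1`, so the result has two last points `b'` and `b' + 2`. -/
theorem exists_lt_not_isArc_insert_erase {F : Finset (Fin n)} {x b b' : Fin n} {d : ℕ}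
    (hn : d + 3 ≤ n) (hF : ∀ y ∈ F, y ≠ b → (y - x).val < d) (hb' : b' ∈ F) (hb'b : b' < b)
    (hb'x : (b' - x).val = d - 1) (hbx : (b - x).val = n - 1) :
    ∃ a ∉ F, a < b ∧ ¬IsArc (insert a (F.erase b)) := by
  have := hF b' hb' hb'b.ne
  have hc : (b' + 1 - x).val = d := by
    rw [Fin.val_add_one_sub_eq_ite]; split_ifs <;> omega
  have ha : (b' + 1 + 1 - x).val = d + 1 := by
    rw [Fin.val_add_one_sub_eq_ite]; split_ifs <;> omega
  have ha' : (b' + 1 + 1 + 1 - x).val = d + 2 := by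
    rw [Fin.val_add_one_sub_eq_ite]; split_ifs <;> omega
  have hG : ∀ y ∈ insert (b' + 1 + 1) (F.erase b), (y - x).val = d + 1 ∨ (y - x).val < d := by
    intro y hy
    rcases mem_insert.mp hy with rfl | hy
    · exact Or.inl ha
    · exact Or.inr (hF y (mem_erase.mp hy).2 (mem_erase.mp hy).1)
  refine ⟨b' + 1 + 1, fun haF => ?_, ?_, fun hGarc => ?_⟩
  · by_cases hab : b' + 1 + 1 = b
    · rw [hab] at ha; omega
    · have := hF _ haF hab; omega
  · rw [Fin.val_sub_eq_ite] at hb'x hbx ha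
    rw [Fin.lt_def] at hb'b ⊢
    simp only [Fin.le_def] at hb'x hbx ha
    have := b.isLt
    have := (b' + 1 + 1).isLt
    split_ifs at hb'x hbx ha <;> omega
  · have := hGarc.eq_of_add_one_notMem
      (mem_insert_of_mem (mem_erase.mpr ⟨hb'b.ne, hb'⟩)) (fun h => by have := hG _ h; omega)
      (mem_insert_self _ _) (fun h => by have := hG _ h; omega)
    rw [this] at hb'x
    omega

theorem exists_lt_not_isArc_of_isArc_insert_erase {F : Finset (Fin n)} {a₀ b₁ b₂ : Fin n}
    (hn : F.card + 3 ≤ n) (hd : 2 ≤ F.card) (ha₀ : a₀ ∉ F) (hb₁ : b₁ ∈ F) (hb₂ : b₂ ∈ F)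
    (h₀₂ : a₀ < b₂) (h₂₁ : b₂ < b₁) (hA₁ : IsArc (insert a₀ (F.erase b₁)))
    (hA₂ : IsArc (insert a₀ (F.erase b₂))) :
    ∃ a ∉ F, a < b₁ ∧ ¬IsArc (insert a (F.erase b₁)) := by
  obtain ⟨x, hx⟩ := hA₁
  rw [card_insert_erase ha₀ hb₁] at hx
  have hA₂' : insert a₀ (F.erase b₂) = insert b₁ ((arc x F.card).erase b₂) := by
    rw [← hx]
    ext y
    simp only [mem_insert, mem_erase]
    grind
  have hFx : ∀ y ∈ F, y ≠ b₁ → (y - x).val < F.card := fun y hy hyb =>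
    mem_arc.mp (hx ▸ mem_insert_of_mem (mem_erase.mpr ⟨hyb, hy⟩))
  have hb₁x : b₁ ∉ arc x F.card := by
    rw [← hx, mem_insert, mem_erase]
    grind
  have ha₀x : (a₀ - x).val < F.card := mem_arc.mp (hx ▸ mem_insert_self _ _)
  rcases eq_of_isArc_insert_erase_arc hd (by omega) (mem_arc.mpr (hFx b₂ hb₂ h₂₁.ne)) hb₁x
    (hA₂' ▸ hA₂) with ⟨h₂, h₁⟩ | ⟨h₂, h₁⟩
  · -- `b₂ = x` and `b₁ = x + d`: the arc contains `a₀ < x`, so it wraps around and `b₁ < b₂`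
    exfalso
    rw [Fin.val_sub_eq_ite] at h₂ h₁ ha₀x
    rw [Fin.lt_def] at h₀₂ h₂₁
    simp only [Fin.le_def] at h₂ h₁ ha₀x
    have := b₁.isLt
    split_ifs at h₂ h₁ ha₀x <;> omega
  · exact exists_lt_not_isArc_insert_erase hn hFx hb₂ h₂₁ h₂ h₁

theorem exists_swap_not_isArc {F F' : Finset (Fin n)} (hF : ¬IsArc F) (hF' : ¬IsArc F')
    (hcard : F'.card = F.card) (hn : F.card + 3 ≤ n) (hlt : F'.sort (· ≤ ·) < F.sort (· ≤ ·)) :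
    ∃ a ∉ F, ∃ b ∈ F, b ∉ F' ∧ a < b ∧ ¬IsArc (insert a (F.erase b)) := by
  obtain ⟨a₀, ha₀F', ha₀F, hbelow⟩ := (Finset.sort_lt_sort_iff hcard).mp hlt
  have habove : ∀ b ∈ F \ F', a₀ < b := fun b hb => by
    rw [mem_sdiff] at hb
    exact lt_of_le_of_ne (not_lt.mp fun h => hb.2 ((hbelow b h).mpr hb.1)) (by grind)
  have hne : (F \ F').Nonempty :=
    sdiff_nonempty.mpr fun h => ha₀F (eq_of_subset_of_card_le h hcard.le ▸ ha₀F')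
  set b₁ := (F \ F').max' hne
  have hb₁ : b₁ ∈ F \ F' := max'_mem _ _
  by_cases hA₁ : IsArc (insert a₀ (F.erase b₁))
  swap
  · exact ⟨a₀, ha₀F, b₁, (mem_sdiff.mp hb₁).1, (mem_sdiff.mp hb₁).2, habove b₁ hb₁, hA₁⟩
  obtain ⟨b₂, hb₂, hb₂₁⟩ : ∃ b₂ ∈ F \ F', b₂ ≠ b₁ := by
    by_contra! h
    exact hF' (eq_insert_erase_of_sdiff_subset hcard ha₀F' ha₀F (mem_sdiff.mp hb₁).1
      (fun y hy => mem_singleton.mpr (h y hy)) ▸ hA₁)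
  by_cases hA₂ : IsArc (insert a₀ (F.erase b₂))
  swap
  · exact ⟨a₀, ha₀F, b₂, (mem_sdiff.mp hb₂).1, (mem_sdiff.mp hb₂).2, habove b₂ hb₂, hA₂⟩
  obtain ⟨a, ha, hab, hG⟩ := exists_lt_not_isArc_of_isArc_insert_erase hn
    (two_le_card_of_not_isArc hF) ha₀F (mem_sdiff.mp hb₁).1 (mem_sdiff.mp hb₂).1
    (habove b₂ hb₂) (lt_of_le_of_ne (le_max' _ _ hb₂) hb₂₁) hA₁ hA₂
  exact ⟨a, ha, b₁, (mem_sdiff.mp hb₁).1, (mem_sdiff.mp hb₁).2, hab, hG⟩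

end Swap

section CycleGraph

variable {n : ℕ}

theorem cycleF_adj_iff [NeZero n] {u v : Fin n} :
    (cycleF n).Adj u v ↔ u ≠ v ∧ (u + 1 = v ∨ v + 1 = u) := by
  simp [cycleF, Fin.ext_iff, Fin.val_add]

theorem induce_arc_connected [NeZero n] (x : Fin n) {m : ℕ} (hm : 0 < m) :
    ((cycleF n).induce (arc x m : Set (Fin n))).Connected := by
  have hx : x ∈ arc x m := by simpa using hm
  have key : ∀ i, ∀ y (hy : y ∈ arc x m), (y - x).val = i →
      ((cycleF n).induce (arc x m : Set (Fin n))).Reachable ⟨x, hx⟩ ⟨y, hy⟩ := by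
    intro i
    induction i with
    | zero =>
      intro y hy hy0
      obtain rfl : y = x := sub_eq_zero.mp (Fin.ext hy0)
      rfl
    | succ i ih =>
      intro y hy hyi
      have hpy : y - 1 + 1 = y := sub_add_cancel y 1
      have hp := Fin.val_add_one_sub_eq_ite x (y - 1)
      rw [hpy, hyi] at hp
      have hpi : (y - 1 - x).val = i := by split_ifs at hp; omega
      have hpm : y - 1 ∈ arc x m := by rw [mem_arc] at hy ⊢; omega
      have hadj : (cycleF n).Adj (y - 1) y := cycleF_adj_iff.mpr
        ⟨fun h => by rw [h] at hpi; omega, Or.inl hpy⟩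
      exact (ih _ hpm hpi).trans (SimpleGraph.Adj.reachable (G := (cycleF n).induce _) hadj)
  exact (SimpleGraph.connected_iff_exists_forall_reachable _).mpr
    ⟨⟨x, hx⟩, fun ⟨y, hy⟩ => key _ y hy rfl⟩

theorem isArc_of_induce_connected [NeZero n] {S : Finset (Fin n)} (hS : S.card < n)
    (h : ((cycleF n).induce (S : Set (Fin n))).Connected) : IsArc S := by
  obtain ⟨c, hc⟩ : ∃ c, c ∉ S := by
    by_contra! hc
    exact hS.ne (by rw [eq_univ_of_forall hc, card_univ, Fintype.card_fin])
  -- measure positions from `c + 1`, so that the vertices of `S` never wrap around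
  set ρ : Fin n → ℕ := fun y => (y - (c + 1)).val
  have hρ_inj {y z : Fin n} (h : ρ y = ρ z) : y = z := sub_left_inj.mp (Fin.ext h)
  have hρS : ∀ y ∈ S, ρ y + 1 < n := fun y hy => by
    have hρc : ρ c + 1 = n := by
      have := Fin.val_add_one_sub_eq_ite (c + 1) c
      rw [sub_self, Fin.val_zero] at this
      by_contra hne
      rw [if_neg hne] at this
      omega
    have : ρ y < n := Fin.isLt _
    have : ρ y ≠ ρ c := fun h => hc (hρ_inj h ▸ hy)
    omega
  have hstep : ∀ y ∈ S, ρ (y + 1) = ρ y + 1 := fun y hy => by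
    simp only [ρ, Fin.val_add_one_sub_eq_ite, (hρS y hy).ne, if_false]
  have hadj {u v : Fin n} (hu : u ∈ S) (hv : v ∈ S) (huv : (cycleF n).Adj u v) :
      ρ v = ρ u + 1 ∨ ρ u = ρ v + 1 := by
    rcases (cycleF_adj_iff.mp huv).2 with rfl | rfl
    exacts [Or.inl (hstep u hu), Or.inr (hstep v hv)]
  obtain ⟨y₀⟩ := h.nonempty
  obtain ⟨u, hu, hu_min⟩ := S.exists_min_image ρ ⟨y₀.val, y₀.prop⟩
  obtain ⟨w, hw, hw_max⟩ := S.exists_max_image ρ ⟨u, hu⟩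
  have hconv : ∀ y, ρ u ≤ ρ y → ρ y ≤ ρ w → y ∈ S := by
    intro y huy hyw
    by_contra hy
    obtain ⟨p⟩ := h.preconnected ⟨u, hu⟩ ⟨w, hw⟩
    obtain ⟨d, -, hd₁, hd₂⟩ := p.exists_boundary_dart {z | ρ z.val < ρ y}
      (lt_of_le_of_ne huy fun h => hy (hρ_inj h ▸ hu)) (not_lt.mpr hyw)
    have hne : ρ d.snd.val ≠ ρ y := fun h => hy (hρ_inj h ▸ d.snd.prop)
    have := hadj d.fst.prop d.snd.prop d.adj
    simp only [Set.mem_ofPred_eq] at hd₁ hd₂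
    omega
  have hw' := hρS w hw
  have huw := hw_max u hu
  have hSu : S = arc u (ρ w - ρ u + 1) := by
    ext y
    have hsub : (y - u).val = if ρ u ≤ ρ y then ρ y - ρ u else n + ρ y - ρ u := by
      rw [← sub_sub_sub_cancel_right y u (c + 1), Fin.val_sub_eq_ite]
      rfl
    rw [mem_arc, hsub]
    constructor
    · intro hy
      have := hu_min y hy
      have := hw_max y hy
      rw [if_pos (by omega)]
      omega
    · intro hy
      split_ifs at hy with h
      · exact hconv y h (by omega)
      · omega
  refine ⟨u, ?_⟩
  rw [hSu, card_arc u (by omega)]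

end CycleGraph

section CutComplex

variable {n : ℕ}

theorem isFacet_cycleF_iff {k : ℕ} (hk : 0 < k) (hkn : k < n) {F : Finset (Fin n)} :
    IsFacet (cycleF n) k F ↔ F.card = n - k ∧ ¬IsArc F := by
  have : NeZero n := ⟨by omega⟩
  have hcompl : Fᶜ.card = n - F.card := by rw [card_compl, Fintype.card_fin]
  have hF : F.card ≤ n := card_le_univ F |>.trans_eq (Fintype.card_fin n)
  unfold IsFacet IsDisconn
  constructor
  · rintro ⟨hcard, hdisconn⟩
    refine ⟨by omega, fun hF => hdisconn ?_⟩
    obtain ⟨x, hx⟩ := hF.compl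
    rw [hx]
    exact induce_arc_connected x (by omega)
  · rintro ⟨hcard, hF⟩
    refine ⟨by omega, fun hconn => hF ?_⟩
    simpa using (isArc_of_induce_connected (by omega) hconn).compl

theorem exists_isFacet_swap {k : ℕ} (hk : 3 ≤ k) (hkn : k < n) {F' F : Finset (Fin n)}
    (hF' : IsFacet (cycleF n) k F') (hF : IsFacet (cycleF n) k F)
    (hlt : F'.sort (· ≤ ·) < F.sort (· ≤ ·)) :
    ∃ G, IsFacet (cycleF n) k G ∧ G.sort (· ≤ ·) < F.sort (· ≤ ·) ∧
      F' ∩ F ⊆ G ∩ F ∧ (G ∩ F).card + 1 = F.card := by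
  have : NeZero n := ⟨by omega⟩
  rw [isFacet_cycleF_iff (by omega) hkn] at hF' hF
  obtain ⟨a, ha, b, hb, hb', hab, hG⟩ :=
    exists_swap_not_isArc hF.2 hF'.2 (hF'.1.trans hF.1.symm) (by omega) hlt
  have hinter : insert a (F.erase b) ∩ F = F.erase b := by
    ext y
    simp only [mem_inter, mem_insert, mem_erase]
    grind
  refine ⟨insert a (F.erase b),
    (isFacet_cycleF_iff (by omega) hkn).mpr ⟨(card_insert_erase ha hb).trans hF.1, hG⟩,
    sort_insert_erase_lt ha hb hab, ?_, ?_⟩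
  · rw [hinter]
    intro y hy
    exact mem_erase.mpr ⟨fun h => hb' (h ▸ (mem_inter.mp hy).1), (mem_inter.mp hy).2⟩
  · rw [hinter, card_erase_add_one hb]

end CutComplex

/-- For `3 ≤ k ≤ n - 1`, the `k`-cut complex `Δ_k(C_n)` is
shellable; indeed, listing the facets in lexicographic order (comparing the
increasing sequences of their vertices) gives a shelling. -/
theorem stmt_13 (n k : ℕ) (hk3 : 3 ≤ k) (hkn : k ≤ n - 1) :
    Shellable (IsFacet (cycleF n) k) ∧
    ∃ l : List (Finset (Fin n)),
      l.Nodup ∧ (∀ F, F ∈ l ↔ IsFacet (cycleF n) k F) ∧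
      l.Pairwise (fun A B => List.Lex (· < ·) (A.sort (· ≤ ·)) (B.sort (· ≤ ·))) ∧
      IsShelling l := by
  classical
  set l := lexList (univ.filter (IsFacet (cycleF n) k))
  have hmem : ∀ F, F ∈ l ↔ IsFacet (cycleF n) k F := by simp [l, mem_lexList]
  have hshell : IsShelling l := by
    refine isShelling_of_pairwise (fun _ _ => lt_asymm) (pairwise_lexList _) ?_
    intro F' hF' F hF hlt
    obtain ⟨G, hG, hGF⟩ :=
      exists_isFacet_swap hk3 (by omega) ((hmem F').mp hF') ((hmem F).mp hF) hlt
    exact ⟨G, (hmem G).mpr hG, hGF⟩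
  exact ⟨⟨l, nodup_lexList _, hmem, hshell⟩, l, nodup_lexList _, hmem, pairwise_lexList _, hshell⟩
end

section
/- Let k ≥ 3, n = k + 4, and let W_n be the squared cycle on vertex set Z/nZ (edges {i,i+1} and {i,i+2} mod n). Then the facets of Δ_k(W_n), i.e., the separating sets of size 4, are exactly the sets {i, i+1, j, j+1} (mod n) with i ≠ j such that i+2 ∉ {i, i+1, j, j+1} and j+2 ∉ {i, i+1, j, j+1}; that is, two pairs of consecutive vertices with gaps of at least one vertex between the pairs in both directions. -/
open Finset

/-- The squared cycle `W_n` on the vertex set `ZMod n`: edges between vertices at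
distance 1 or 2 around the cycle. -/
def squaredCycle (n : ℕ) : SimpleGraph (ZMod n) where
  Adj x y := x ≠ y ∧ (x - y = 1 ∨ y - x = 1 ∨ x - y = 2 ∨ y - x = 2)
  symm := by
    constructor
    intro x y h
    refine ⟨h.1.symm, by tauto⟩
  loopless := by
    constructor
    intro x h
    exact h.1 rfl

/-! Removing `{i, i + 1, j, j + 1}` leaves the two open arcs between the pairs, and an edge of
`W_n`, a step of length 1 or 2, cannot jump over a pair, so the arcs stay apart. Conversely, if
the complement of a 4-set `F` is disconnected, walk around the cycle from one part of the
complement until the other part is first reached: the two vertices just before it lie in `F`,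
giving a pair `{i, i + 1} ⊆ F` followed by the other part. Walking on back to the first part
gives a second pair, and the two pairs exhaust `F`. -/

namespace SimpleGraph

variable {V : Type*} {G : SimpleGraph V}

theorem Reachable.iff_of_forall_adj {P : V → Prop} (hP : ∀ u v, G.Adj u v → (P u ↔ P v))
    {u v : V} (h : G.Reachable u v) : P u ↔ P v := by
  obtain ⟨w⟩ := h
  induction w with
  | nil => rfl
  | cons h _ ih => exact (hP _ _ h).trans ih

theorem not_preconnected_induce_iff {S : Set V} :
    ¬ (G.induce S).Preconnected ↔ ∃ P : V → Prop,
      (∀ u ∈ S, ∀ v ∈ S, G.Adj u v → (P u ↔ P v)) ∧ ∃ a ∈ S, ∃ b ∈ S, P a ∧ ¬ P b := by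
  constructor
  · intro h
    obtain ⟨x, y, hxy⟩ : ∃ x y : S, ¬ (G.induce S).Reachable x y := by
      simpa [Preconnected] using h
    refine ⟨fun v => ∃ hv : v ∈ S, (G.induce S).Reachable x ⟨v, hv⟩, ?_, x, x.2, y, y.2,
      ⟨x.2, .rfl⟩, fun ⟨_, hy⟩ => hxy hy⟩
    intro u hu v hv huv
    have hadj : (G.induce S).Adj ⟨u, hu⟩ ⟨v, hv⟩ := huv
    exact ⟨fun ⟨_, h⟩ => ⟨hv, h.trans hadj.reachable⟩,
      fun ⟨_, h⟩ => ⟨hu, h.trans hadj.symm.reachable⟩⟩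
  · rintro ⟨P, hP, a, ha, b, hb, hPa, hPb⟩ hpre
    exact hPb (((hpre ⟨a, ha⟩ ⟨b, hb⟩).iff_of_forall_adj (P := fun v : S => P v)
      fun u v huv => hP u u.2 v v.2 huv).1 hPa)

end SimpleGraph

theorem ZMod.val_add_cases {n : ℕ} [NeZero n] (x y : ZMod n) :
    (x + y).val = x.val + y.val ∨ (x + y).val + n = x.val + y.val := by
  rcases lt_or_ge (x.val + y.val) n with h | h
  · exact .inl (ZMod.val_add_of_lt h)
  · exact .inr (ZMod.val_add_val_of_le h).symm

namespace squaredCycle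

variable {n : ℕ}

theorem adj_add_one (hn : 2 ≤ n) (x : ZMod n) : (squaredCycle n).Adj x (x + 1) := by
  have : Fact (1 < n) := ⟨by omega⟩
  exact ⟨by simp, .inr (.inl (by ring))⟩

theorem adj_add_two (hn : 3 ≤ n) (x : ZMod n) : (squaredCycle n).Adj x (x + 2) := by
  have h2 : (2 : ZMod n) ≠ 0 := fun h => by
    have := ZMod.val_two_eq_two_mod n
    simp [h, Nat.mod_eq_of_lt (show 2 < n by omega)] at this
  exact ⟨fun h => h2 (by linear_combination -h), .inr (.inr (.inr (by ring)))⟩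

theorem eq_add_of_adj {x y : ZMod n} (h : (squaredCycle n).Adj x y) :
    y = x + 1 ∨ x = y + 1 ∨ y = x + 2 ∨ x = y + 2 := by
  rcases h.2 with h | h | h | h
  · exact .inr (.inl (by linear_combination h))
  · exact .inl (by linear_combination h)
  · exact .inr (.inr (.inr (by linear_combination h)))
  · exact .inr (.inr (.inl (by linear_combination h)))

theorem card_pairs (hn : 2 ≤ n) {i j : ZMod n} (hij : i ≠ j) (hi : i + 1 ≠ j) (hj : j + 1 ≠ i) :
    ({i, i + 1, j, j + 1} : Finset (ZMod n)).card = 4 := by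
  have : Fact (1 < n) := ⟨by omega⟩
  rw [Finset.card_eq_four]
  exact ⟨i, i + 1, j, j + 1, by simp, hij, hj.symm, hi, by simpa using hij, by simp, rfl⟩

theorem exists_pair_mem_of_separates (hn : 3 ≤ n) {F : Finset (ZMod n)} {P : ZMod n → Prop}
    (hP : ∀ u ∉ F, ∀ v ∉ F, (squaredCycle n).Adj u v → (P u ↔ P v))
    {a b : ZMod n} (ha : a ∉ F) (hb : b ∉ F) (hPa : P a) (hPb : ¬ P b) :
    ∃ i, i ∈ F ∧ i + 1 ∈ F ∧ i + 2 ∉ F ∧ ¬ P (i + 2) := by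
  classical
  have : NeZero n := ⟨by omega⟩
  have hex : ∃ t : ℕ, a + t ∉ F ∧ ¬ P (a + t) := ⟨(b - a).val, by simpa using ⟨hb, hPb⟩⟩
  obtain ⟨t, ⟨htF, htP⟩, hmin⟩ : ∃ t : ℕ, (a + t ∉ F ∧ ¬ P (a + t)) ∧
      ∀ s < t, a + s ∉ F → P (a + s) :=
    ⟨Nat.find hex, Nat.find_spec hex,
      fun s hs hsF => not_not.1 fun h => Nat.find_min hex hs ⟨hsF, h⟩⟩
  have hprev : ∀ s < t, (squaredCycle n).Adj (a + s) (a + t) → a + s ∈ F := fun s hs hadj => by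
    by_contra hsF
    exact htP ((hP _ hsF _ htF hadj).1 (hmin s hs hsF))
  obtain _ | _ | s := t
  · exact absurd (by simpa using hPa) htP
  · exact absurd (by simpa using hprev 0 one_pos (by simpa using adj_add_one (by omega) a)) ha
  · have h1 : a + ((s + 1 : ℕ) : ZMod n) = a + s + 1 := by push_cast; ring
    have h2 : a + ((s + 1 + 1 : ℕ) : ZMod n) = a + s + 2 := by push_cast; ring
    rw [h2] at htF htP hprev
    have hi1 := hprev (s + 1) (by omega) <| by
      rw [h1]
      simpa [add_assoc, one_add_one_eq_two] using adj_add_one (by omega) (a + s + 1 : ZMod n)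
    rw [h1] at hi1
    exact ⟨a + s, hprev s (by omega) (adj_add_two hn _), hi1, htF, htP⟩

theorem exists_eq_pairs_of_not_preconnected [NeZero n] (hn : 3 ≤ n) {F : Finset (ZMod n)}
    (hF : F.card = 4)
    (h : ¬ ((squaredCycle n).induce ((Fᶜ : Finset (ZMod n)) : Set (ZMod n))).Preconnected) :
    ∃ i j : ZMod n, i ≠ j ∧ F = {i, i + 1, j, j + 1} ∧ i + 2 ∉ F ∧ j + 2 ∉ F := by
  obtain ⟨P, hP, a, ha, b, hb, hPa, hPb⟩ := SimpleGraph.not_preconnected_induce_iff.1 h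
  simp only [Finset.coe_compl, Set.mem_compl_iff, Finset.mem_coe] at hP ha hb
  obtain ⟨i, hi, hi1, hi2, hPi⟩ := exists_pair_mem_of_separates hn hP ha hb hPa hPb
  obtain ⟨j, hj, hj1, hj2, hPj⟩ := exists_pair_mem_of_separates hn (P := fun v => ¬ P v)
    (fun u hu v hv huv => not_congr (hP u hu v hv huv)) hi2 ha hPi (not_not.2 hPa)
  have hij : i ≠ j := by rintro rfl; exact hPj hPi
  have hi1j : i + 1 ≠ j := by
    rintro rfl; exact hi2 (by simpa [add_assoc, one_add_one_eq_two] using hj1)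
  have hj1i : j + 1 ≠ i := by
    rintro rfl; exact hj2 (by simpa [add_assoc, one_add_one_eq_two] using hi1)
  refine ⟨i, j, hij, (Finset.eq_of_subset_of_card_le ?_ ?_).symm, hi2, hj2⟩
  · intro x hx
    simp only [Finset.mem_insert, Finset.mem_singleton] at hx
    rcases hx with rfl | rfl | rfl | rfl <;> assumption
  · rw [hF, card_pairs (by omega) hij hi1j hj1i]

theorem three_le_val_sub [NeZero n] {i j : ZMod n} (hij : i ≠ j)
    (hi2 : i + 2 ∉ ({i, i + 1, j, j + 1} : Finset (ZMod n))) : 3 ≤ (j - i).val := by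
  have hj : j = i + ((j - i).val : ℕ) := by rw [ZMod.natCast_zmod_val]; ring
  by_contra! h
  obtain h | h | h : (j - i).val = 0 ∨ (j - i).val = 1 ∨ (j - i).val = 2 := by omega
  all_goals rw [h] at hj; norm_num at hj; subst hj
  · exact hij rfl
  all_goals simp [add_assoc, one_add_one_eq_two] at hi2

theorem val_sub_add_val_sub [NeZero n] {i j : ZMod n} (hij : i ≠ j) :
    (j - i).val + (i - j).val = n := by
  have h := ZMod.neg_val (j - i)
  rw [neg_sub, if_neg (sub_ne_zero.2 hij.symm)] at h
  have := ZMod.val_lt (j - i)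
  omega

theorem val_sub_lt_iff_of_adj [NeZero n] {i j u v : ZMod n} (hd : (j - i).val + 2 ≤ n)
    (hu : u ∉ ({i, i + 1, j, j + 1} : Finset (ZMod n)))
    (hv : v ∉ ({i, i + 1, j, j + 1} : Finset (ZMod n))) (huv : (squaredCycle n).Adj u v) :
    (u - i).val < (j - i).val ↔ (v - i).val < (j - i).val := by
  have hpos : ∀ w ∉ ({i, i + 1, j, j + 1} : Finset (ZMod n)), (w - i).val ≠ 0 ∧
      (w - i).val ≠ 1 ∧ (w - i).val ≠ (j - i).val ∧ (w - i).val ≠ (j - i).val + 1 := by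
    intro w hw
    have hinj : ∀ z, (w - i).val = (z - i).val → w = z :=
      fun z h => sub_left_inj.1 (ZMod.val_injective n h)
    have h1 : (i + 1 - i).val = 1 := by rw [add_sub_cancel_left, ZMod.val_one'' (by omega)]
    have hj1 : (j + 1 - i).val = (j - i).val + 1 := by
      rw [← sub_add_eq_add_sub, ZMod.val_add_of_lt] <;> rw [ZMod.val_one'' (by omega)]
      omega
    simp only [Finset.mem_insert, Finset.mem_singleton, not_or] at hw
    refine ⟨fun h => hw.1 (hinj i (by simpa using h)), fun h => hw.2.1 (hinj _ (by rw [h1, h])),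
      fun h => hw.2.2.1 (hinj _ h), fun h => hw.2.2.2 (hinj _ (by rw [hj1, h]))⟩
  have hstep : ∀ u e, e.val ≤ 2 → u ∉ ({i, i + 1, j, j + 1} : Finset (ZMod n)) →
      u + e ∉ ({i, i + 1, j, j + 1} : Finset (ZMod n)) →
      ((u - i).val < (j - i).val ↔ (u + e - i).val < (j - i).val) := by
    intro u e he hu hue
    have hsplit := ZMod.val_add_cases (u - i) e
    rw [sub_add_eq_add_sub] at hsplit
    have := ZMod.val_lt (u - i)
    have := hpos u hu
    have := hpos _ hue
    omega
  have h1 : (1 : ZMod n).val ≤ 2 := by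
    rw [ZMod.val_one_eq_one_mod]; exact (Nat.mod_le _ _).trans one_le_two
  have h2 : (2 : ZMod n).val ≤ 2 := by
    rw [ZMod.val_two_eq_two_mod]; exact Nat.mod_le _ _
  rcases eq_add_of_adj huv with rfl | rfl | rfl | rfl
  exacts [hstep u 1 h1 hu hv, (hstep v 1 h1 hv hu).symm, hstep u 2 h2 hu hv,
    (hstep v 2 h2 hv hu).symm]

theorem not_preconnected_induce_compl_pairs [NeZero n] {i j : ZMod n} (hij : i ≠ j)
    (hi2 : i + 2 ∉ ({i, i + 1, j, j + 1} : Finset (ZMod n)))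
    (hj2 : j + 2 ∉ ({i, i + 1, j, j + 1} : Finset (ZMod n))) :
    ¬ ((squaredCycle n).induce
      ((({i, i + 1, j, j + 1} : Finset (ZMod n))ᶜ : Finset (ZMod n)) :
        Set (ZMod n))).Preconnected := by
  have hswap : ({i, i + 1, j, j + 1} : Finset (ZMod n)) = {j, j + 1, i, i + 1} := by
    ext; simp only [Finset.mem_insert, Finset.mem_singleton]; tauto
  have hd := three_le_val_sub hij hi2
  have hd' := three_le_val_sub hij.symm (hswap ▸ hj2)
  have hsum := val_sub_add_val_sub hij
  have h2 : (2 : ZMod n).val = 2 := by rw [ZMod.val_two_eq_two_mod, Nat.mod_eq_of_lt (by omega)]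
  refine SimpleGraph.not_preconnected_induce_iff.2
    ⟨fun v => (v - i).val < (j - i).val, ?_, i + 2,
      Finset.mem_coe.2 (Finset.mem_compl.2 hi2), j + 2, Finset.mem_coe.2 (Finset.mem_compl.2 hj2),
      ?_, ?_⟩
  · intro u hu v hv
    simp only [Finset.coe_compl, Set.mem_compl_iff, Finset.mem_coe] at hu hv
    exact val_sub_lt_iff_of_adj (by omega) hu hv
  · dsimp only
    rw [add_sub_cancel_left, h2]
    omega
  · dsimp only
    rw [← sub_add_eq_add_sub, ZMod.val_add_of_lt] <;> omega

end squaredCycle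

/-- For `k ≥ 3` and `n = k + 4`, the facets of `Δ_k(W_n)` (the
separating 4-sets) are exactly the sets `{i, i+1, j, j+1}` with `i ≠ j`,
`i+2 ∉ {i, i+1, j, j+1}` and `j+2 ∉ {i, i+1, j, j+1}`. -/
theorem stmt_15 (k : ℕ) (hk : 3 ≤ k) :
    ∀ F : Finset (ZMod (k + 4)),
      IsFacet (squaredCycle (k + 4)) k F ↔
        ∃ i j : ZMod (k + 4), i ≠ j ∧
          F = {i, i + 1, j, j + 1} ∧
          i + 2 ∉ ({i, i + 1, j, j + 1} : Finset (ZMod (k + 4))) ∧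
          j + 2 ∉ ({i, i + 1, j, j + 1} : Finset (ZMod (k + 4))) := by
  intro F
  have hcompl : ∀ G : Finset (ZMod (k + 4)), Gᶜ.card = k ↔ G.card = 4 := fun G => by
    have := G.card_le_univ
    rw [ZMod.card] at this
    rw [Finset.card_compl, ZMod.card]
    omega
  constructor
  · rintro ⟨hF, hdisc⟩
    have hne : (Fᶜ : Finset (ZMod (k + 4))).Nonempty := Finset.card_pos.1 (by omega)
    obtain ⟨i, j, hij, rfl, hi2, hj2⟩ := squaredCycle.exists_eq_pairs_of_not_preconnected
      (by omega) ((hcompl F).1 hF)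
      fun h => hdisc ((SimpleGraph.connected_iff _).2 ⟨h, hne.coe_sort⟩)
    exact ⟨i, j, hij, rfl, hi2, hj2⟩
  · rintro ⟨i, j, hij, rfl, hi2, hj2⟩
    refine ⟨(hcompl _).2 (squaredCycle.card_pairs (by omega) hij ?_ ?_),
      fun h => squaredCycle.not_preconnected_induce_compl_pairs hij hi2 hj2 h.preconnected⟩
    · rintro rfl
      simp [add_assoc, one_add_one_eq_two] at hi2
    · rintro rfl
      simp [add_assoc, one_add_one_eq_two] at hj2
end

section
/- Every pure simplicial complex Δ can be realized as a cut complex: there exist k and a chordal graph G with Δ_k(G) = Δ. Specifically, if Δ has n vertices, t > 1 facets, and dimension d, construct G on n + t vertices u_1,…,u_n, f_1,…,f_t where {u_1,…,u_n} forms a clique and u_i f_j is an edge iff vertex v_i lies in facet F_j; then for k = n + t - (d+1), the separating sets of G of size d+1 are exactly the neighborhoods Γ(f_j), and Δ_k(G) ≅ Δ. -/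
open Finset

/-- The graph of the universal construction: a clique on the `n` vertices of the
complex, together with one new vertex per facet, joined to the vertices of that
facet. -/
def facetGraph {n t : ℕ} (Fac : Fin t → Finset (Fin n)) : SimpleGraph (Fin n ⊕ Fin t) where
  Adj x y :=
    match x, y with
    | Sum.inl u, Sum.inl u' => u ≠ u'
    | Sum.inl u, Sum.inr j => u ∈ Fac j
    | Sum.inr j, Sum.inl u => u ∈ Fac j
    | Sum.inr _, Sum.inr _ => False
  symm := by
    constructor
    intro x y h
    cases x <;> cases y <;> simp_all [ne_comm]
  loopless := by
    constructor
    intro x h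
    cases x <;> simp_all

/-- A graph is chordal: every cycle of length at least 4 has a chord. -/
def IsChordal {V : Type*} (G : SimpleGraph V) : Prop :=
  ∀ (v : V) (w : G.Walk v v), w.IsCycle → 4 ≤ w.length →
    ∃ x ∈ w.support, ∃ y ∈ w.support, G.Adj x y ∧ s(x, y) ∉ w.edges

/-!
The graph is a split graph: the vertices of `Δ` form a clique and the facet vertices an
independent set. In a cycle of length at least four no two consecutive vertices are facet
vertices, so two clique vertices sit at distance at least two along the cycle and span a chord.

If the complement of a `(d+1)`-set `F` contains a clique vertex and every facet vertex `f_j`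
outside `F` still has a neighbour outside `F`, the complement is connected through the clique.
So a separating `(d+1)`-set contains, hence equals, some `Γ(f_j)`; conversely removing `Γ(f_j)`
isolates `f_j`. The faces of `Δ_k(G)` are the subsets of its facets, i.e. of the `Γ(f_j)`.
-/

namespace SimpleGraph

variable {V : Type*} {G : SimpleGraph V}

namespace Walk

lemma IsCycle.getVert_eq_getVert_iff {u : V} {p : G.Walk u u} (hp : p.IsCycle) {i j : ℕ}
    (hi : i ≤ p.length) (hj : j ≤ p.length) :
    p.getVert i = p.getVert j ↔ i = j ∨ i = 0 ∧ j = p.length ∨ i = p.length ∧ j = 0 := by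
  constructor
  · intro h
    rcases Nat.eq_zero_or_pos i with rfl | hi0
    · rw [getVert_zero, eq_comm, hp.getVert_endpoint_iff hj] at h
      omega
    rcases Nat.eq_zero_or_pos j with rfl | hj0
    · rw [getVert_zero, hp.getVert_endpoint_iff hi] at h
      omega
    exact Or.inl (hp.getVert_injOn ⟨hi0, hi⟩ ⟨hj0, hj⟩ h)
  · rintro (rfl | ⟨rfl, rfl⟩ | ⟨rfl, rfl⟩) <;> simp

lemma IsCycle.mk_getVert_notMem_edges {u : V} {p : G.Walk u u} (hp : p.IsCycle) {i j : ℕ}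
    (hij : i + 2 ≤ j) (hj : j ≤ p.length) (hji : j + 2 ≤ i + p.length) :
    s(p.getVert i, p.getVert j) ∉ p.edges := by
  rw [mk_mem_edges_iff_exists]
  rintro ⟨m, hm, he⟩
  rcases Sym2.eq_iff.mp he with ⟨h₁, h₂⟩ | ⟨h₁, h₂⟩ <;>
  · rw [hp.getVert_eq_getVert_iff (by omega) (by omega)] at h₁ h₂
    omega

end Walk

theorem isChordal_of_isClique_of_isIndepSet {C : Set V} (hC : G.IsClique C)
    (hI : G.IsIndepSet Cᶜ) : IsChordal G := by
  intro v w hw hlen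
  have hcover : ∀ i < w.length, w.getVert i ∈ C ∨ w.getVert (i + 1) ∈ C := by
    intro i hi
    by_contra! h
    exact hI h.1 h.2 (w.adj_getVert_succ hi).ne (w.adj_getVert_succ hi)
  have hchord : ∀ i j, i + 2 ≤ j → j ≤ w.length → j + 2 ≤ i + w.length →
      w.getVert i ∈ C → w.getVert j ∈ C →
      ∃ x ∈ w.support, ∃ y ∈ w.support, G.Adj x y ∧ s(x, y) ∉ w.edges :=
    fun i j hij hj hji hiC hjC =>
      ⟨_, w.getVert_mem_support i, _, w.getVert_mem_support j,
        hC hiC hjC fun h => by rw [hw.getVert_eq_getVert_iff (by omega) hj] at h; omega,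
        hw.mk_getVert_notMem_edges hij hj hji⟩
  by_cases h₁ : w.getVert 1 ∈ C
  · by_cases h₃ : w.getVert 3 ∈ C
    · exact hchord 1 3 le_rfl (by omega) (by omega) h₁ h₃
    · exact hchord 2 4 le_rfl hlen (by omega) ((hcover 2 (by omega)).resolve_right h₃)
        ((hcover 3 (by omega)).resolve_left h₃)
  · exact hchord 0 2 le_rfl (by omega) (by omega) ((hcover 0 (by omega)).resolve_right h₁)
      ((hcover 1 (by omega)).resolve_left h₁)

theorem induce_connected_of_isClique {C S : Set V} (hC : G.IsClique C) {c : V}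
    (hc : c ∈ S ∩ C) (hS : ∀ v ∈ S \ C, ∃ x ∈ S ∩ C, G.Adj x v) :
    (G.induce S).Connected := by
  have hreach : ∀ x (hx : x ∈ S ∩ C), (G.induce S).Reachable ⟨c, hc.1⟩ ⟨x, hx.1⟩ := by
    intro x hx
    by_cases hcx : c = x
    · subst hcx
      rfl
    · exact Adj.reachable (hC hc.2 hx.2 hcx)
  rw [connected_iff_exists_forall_reachable]
  refine ⟨⟨c, hc.1⟩, fun ⟨v, hv⟩ => ?_⟩
  by_cases hvC : v ∈ C
  · exact hreach v ⟨hv, hvC⟩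
  · obtain ⟨x, hx, hxv⟩ := hS v ⟨hv, hvC⟩
    exact (hreach x hx).trans (Adj.reachable hxv)

theorem not_connected_induce_of_forall_not_adj {S : Set V} {x y : V} (hx : x ∈ S) (hy : y ∈ S)
    (hxy : x ≠ y) (hiso : ∀ z ∈ S, ¬G.Adj x z) : ¬(G.induce S).Connected := fun h => by
  have : Nontrivial S := ⟨⟨⟨x, hx⟩, ⟨y, hy⟩, by simpa using hxy⟩⟩
  obtain ⟨⟨z, hz⟩, hadj⟩ := h.preconnected.exists_adj_of_nontrivial ⟨x, hx⟩
  exact hiso z hz hadj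

end SimpleGraph

open SimpleGraph

theorem isFace_iff_exists_isFacet {V : Type*} [Fintype V] [DecidableEq V] {G : SimpleGraph V}
    {k : ℕ} {σ : Finset V} : IsFace G k σ ↔ ∃ F, σ ⊆ F ∧ IsFacet G k F := by
  constructor
  · rintro ⟨S, hS, hcard, hdis⟩
    exact ⟨Sᶜ, subset_compl_comm.mp hS, by rwa [compl_compl], by rwa [compl_compl]⟩
  · rintro ⟨F, hσF, hcard, hdis⟩
    exact ⟨Fᶜ, compl_subset_compl.mpr hσF, hcard, hdis⟩

section facetGraph

variable {n t : ℕ} (Fac : Fin t → Finset (Fin n))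

lemma facetGraph_isClique_range_inl : (facetGraph Fac).IsClique (Set.range Sum.inl) := by
  rintro _ ⟨u, rfl⟩ _ ⟨u', rfl⟩ h
  exact fun e => h (congrArg Sum.inl e)

lemma facetGraph_isIndepSet_range_inr : (facetGraph Fac).IsIndepSet (Set.range Sum.inr) := by
  rintro _ ⟨j, rfl⟩ _ ⟨j', rfl⟩ _ h
  exact h

theorem isChordal_facetGraph : IsChordal (facetGraph Fac) :=
  isChordal_of_isClique_of_isIndepSet (facetGraph_isClique_range_inl Fac)
    (Set.compl_range_inl ▸ facetGraph_isIndepSet_range_inr Fac)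

theorem exists_map_facet_subset_of_isDisconn_compl (ht : 0 < t) {F : Finset (Fin n ⊕ Fin t)}
    (hF : IsDisconn (facetGraph Fac) Fᶜ) : ∃ j, (Fac j).map Function.Embedding.inl ⊆ F := by
  by_contra! hno
  have hout : ∀ j, ∃ u ∈ Fac j, Sum.inl u ∉ F := fun j => by
    simpa [Finset.not_subset] using hno j
  obtain ⟨u₀, -, hu₀⟩ := hout ⟨0, ht⟩
  refine hF (induce_connected_of_isClique (facetGraph_isClique_range_inl Fac)
    (c := Sum.inl u₀) (by simpa using hu₀) ?_)
  rintro (u | j) ⟨-, hv⟩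
  · exact absurd ⟨u, rfl⟩ hv
  · obtain ⟨u, hu, huF⟩ := hout j
    exact ⟨Sum.inl u, by simpa using huF, hu⟩

theorem isDisconn_compl_map_facet (ht : 1 < t) (j : Fin t) :
    IsDisconn (facetGraph Fac) ((Fac j).map Function.Embedding.inl)ᶜ := by
  obtain ⟨j', hj'⟩ := Fintype.exists_ne_of_one_lt_card (by simpa using ht) j
  refine not_connected_induce_of_forall_not_adj (x := Sum.inr j) (y := Sum.inr j')
    (by simp) (by simp) (by simpa using hj'.symm) ?_
  rintro (u | j₂) hz hadj
  · exact (by simpa using hz : u ∉ Fac j) hadj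
  · exact hadj

variable {d : ℕ}

theorem card_eq_and_isDisconn_compl_iff (ht : 1 < t) (hpure : ∀ j, (Fac j).card = d + 1)
    (F : Finset (Fin n ⊕ Fin t)) :
    (F.card = d + 1 ∧ IsDisconn (facetGraph Fac) Fᶜ) ↔
      ∃ j, F = (Fac j).map Function.Embedding.inl := by
  constructor
  · rintro ⟨hcard, hdis⟩
    obtain ⟨j, hj⟩ := exists_map_facet_subset_of_isDisconn_compl Fac (by omega) hdis
    exact ⟨j, (eq_of_subset_of_card_le hj (by rw [card_map, hpure, hcard])).symm⟩
  · rintro ⟨j, rfl⟩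
    exact ⟨by rw [card_map, hpure], isDisconn_compl_map_facet Fac ht j⟩

theorem isFacet_facetGraph_iff (ht : 1 < t) (hpure : ∀ j, (Fac j).card = d + 1)
    (F : Finset (Fin n ⊕ Fin t)) :
    IsFacet (facetGraph Fac) (n + t - (d + 1)) F ↔ ∃ j, F = (Fac j).map Function.Embedding.inl := by
  have hdn : d + 1 ≤ n := by simpa [hpure] using card_le_univ (Fac ⟨0, by omega⟩)
  have hF : F.card ≤ n + t := by simpa using card_le_univ F
  rw [IsFacet, card_compl, Fintype.card_sum, Fintype.card_fin, Fintype.card_fin,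
    ← card_eq_and_isDisconn_compl_iff Fac ht hpure]
  exact and_congr_left' (by omega)

end facetGraph

theorem stmt_17_general (n t d : ℕ) (Fac : Fin t → Finset (Fin n))
    (ht : 1 < t)
    (hpure : ∀ j, (Fac j).card = d + 1) :
    IsChordal (facetGraph Fac) ∧
    (∀ F : Finset (Fin n ⊕ Fin t),
      (F.card = d + 1 ∧ IsDisconn (facetGraph Fac) Fᶜ) ↔
        ∃ j, F = (Fac j).map Function.Embedding.inl) ∧
    (∀ σ : Finset (Fin n ⊕ Fin t),
      IsFace (facetGraph Fac) (n + t - (d + 1)) σ ↔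
        ∃ τ : Finset (Fin n), σ = τ.map Function.Embedding.inl ∧ ∃ j, τ ⊆ Fac j) := by
  refine ⟨isChordal_facetGraph Fac, card_eq_and_isDisconn_compl_iff Fac ht hpure, fun σ => ?_⟩
  simp_rw [isFace_iff_exists_isFacet, isFacet_facetGraph_iff Fac ht hpure]
  constructor
  · rintro ⟨_, hσ, j, rfl⟩
    obtain ⟨τ, hτ, rfl⟩ := subset_map_iff.mp hσ
    exact ⟨τ, rfl, j, hτ⟩
  · rintro ⟨τ, rfl, j, hτ⟩
    exact ⟨_, map_subset_map.mpr hτ, j, rfl⟩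

/-- universal construction realizing any pure simplicial complex as
a cut complex of a chordal graph.  Let `Δ` be a pure `d`-dimensional complex on
`n` vertices given by its `t > 1` facets `Fac 0, …, Fac (t-1)` (distinct, each of
size `d+1`, covering all vertices).  Let `G` be the graph obtained from the clique
on the `n` vertices by adding, for each facet, a new vertex joined to the vertices
of that facet, and let `k = n + t - (d+1)`.  Then: `G` is chordal; the separating
sets of `G` of size `d+1` are exactly the (images of the) facets of `Δ`
(the neighbourhoods `Γ(f_j)`); and the faces of `Δ_k(G)` are exactly the (images
of the) faces of `Δ`, i.e. `Δ_k(G) = Δ`. -/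
theorem stmt_17 (n t d : ℕ) (Fac : Fin t → Finset (Fin n))
    (hinj : Function.Injective Fac) (ht : 1 < t)
    (hpure : ∀ j, (Fac j).card = d + 1)
    (hcover : ∀ v : Fin n, ∃ j, v ∈ Fac j) :
    IsChordal (facetGraph Fac) ∧
    (∀ F : Finset (Fin n ⊕ Fin t),
      (F.card = d + 1 ∧ IsDisconn (facetGraph Fac) Fᶜ) ↔
        ∃ j, F = (Fac j).map Function.Embedding.inl) ∧
    (∀ σ : Finset (Fin n ⊕ Fin t),
      IsFace (facetGraph Fac) (n + t - (d + 1)) σ ↔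
        ∃ τ : Finset (Fin n), σ = τ.map Function.Embedding.inl ∧ ∃ j, τ ⊆ Fac j) :=
  stmt_17_general n t d Fac ht hpure
end

section
/- Let k ≥ 4 and let G_k be the graph on k+2 vertices consisting of vertices {1, 2, …, 2m} (m = ⌊k/2⌋) plus {a} if k is odd or {a,b} if k is even, with edges making each {2i-1, 2i, 2i+1, 2i+2} (1 ≤ i ≤ m-1) a clique, {a,1,2} a triangle, and (if k even) {b, 2m-1, 2m} a triangle. Then the facets of Δ_k(G_k) are exactly the m ≥ 2 disjoint edges {2i-1, 2i} for 1 ≤ i ≤ m; in particular, Δ_k(G_k) is a 1-dimensional complex consisting of m ≥ 2 pairwise disjoint edges, which is not shellable. -/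
open Finset

/-- The minimal nonshellable ("kayak paddle") graph `G_k` on `k + 2` vertices.
Writing `m = ⌊k/2⌋`, there are `P = k + (k % 2)` "numbered" vertices
`0, 1, …, P - 1` (representing `1, …, 2m` resp. `1, …, 2m+2`), the vertex `a`
(index `P`), and for even `k` the vertex `b` (index `P + 1`).  Two numbered
vertices are adjacent iff they lie in a common 4-clique `{2i, 2i+1, 2i+2, 2i+3}`
(0-indexed consecutive pairs); `a` forms a triangle with the first pair, and `b`
(when present) forms a triangle with the last pair. -/
def kayakGraph (k : ℕ) : SimpleGraph (Fin (k + 2)) where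
  Adj x y := x ≠ y ∧
    ((x.val < k + k % 2 ∧ y.val < k + k % 2 ∧
        (x.val / 2 = y.val / 2 ∨ x.val / 2 + 1 = y.val / 2 ∨ y.val / 2 + 1 = x.val / 2)) ∨
      (x.val = k + k % 2 ∧ y.val < 2) ∨ (y.val = k + k % 2 ∧ x.val < 2) ∨
      (x.val = k + k % 2 + 1 ∧ k + k % 2 ≤ y.val + 2 ∧ y.val < k + k % 2) ∨
      (y.val = k + k % 2 + 1 ∧ k + k % 2 ≤ x.val + 2 ∧ x.val < k + k % 2))
  symm := by
    constructor
    intro x y h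
    exact ⟨h.1.symm, by tauto⟩
  loopless := by
    constructor
    intro x h
    exact h.1 rfl

/-! The numbered vertices fall into blocks `{2j, 2j+1}`, consecutive blocks spanning 4-cliques,
with `a` attached to the first block and `b` to the last. Removing two vertices that leave a
vertex in every block keeps a path through one survivor per block, and every other surviving
vertex is adjacent to one of them, so the graph stays connected. Removing a whole block `i < m`
cuts `a` and the blocks before it off from the rest. So the facets are `m` disjoint edges, and
no order of them is a shelling: the second facet meets the first in the empty face instead of a
codimension-one face. -/

open SimpleGraph

theorem SimpleGraph.not_connected_induce_of_adj_closed {V : Type*} {G : SimpleGraph V}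
    {s : Set V} (p : V → Prop) (hp : ∀ x y, y ∈ s → G.Adj x y → p x → p y) {u v : V}
    (hu : u ∈ s) (hv : v ∈ s) (hpu : p u) (hpv : ¬ p v) : ¬ (G.induce s).Connected := by
  intro hconn
  obtain ⟨w⟩ := hconn.preconnected ⟨u, hu⟩ ⟨v, hv⟩
  suffices ∀ {a b : s}, (G.induce s).Walk a b → p a → p b from hpv (this w hpu)
  intro a b w
  induction w with
  | nil => exact id
  | cons h _ ih => exact fun ha => ih (hp _ _ (Subtype.prop _) h ha)

theorem not_shellable_of_pairwise_disjoint {V : Type*} [DecidableEq V]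
    {Fac : Finset V → Prop} {F G : Finset V} (hF : Fac F) (hG : Fac G) (hFG : F ≠ G)
    (hdisj : ∀ F G, Fac F → Fac G → F ≠ G → Disjoint F G) (hcard : ∀ F, Fac F → 2 ≤ F.card) :
    ¬ Shellable Fac := by
  rintro ⟨l, hnd, hmem, hsh⟩
  have hlen : 2 ≤ l.length := calc
    2 = ({F, G} : Finset (Finset V)).card := (card_pair hFG).symm
    _ ≤ l.toFinset.card := card_le_card (by simp [insert_subset_iff, hmem, hF, hG])
    _ ≤ l.length := l.toFinset_card_le
  obtain ⟨m, hm, -, hm_card⟩ := hsh 0 1 one_pos hlen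
  obtain rfl : m = 0 := by omega
  rw [List.getD_eq_getElem _ _ (by omega), List.getD_eq_getElem _ _ hlen] at hm_card
  have hfac : ∀ i (hi : i < l.length), Fac l[i] := fun i hi => (hmem _).1 (List.getElem_mem _)
  have h01 : l[0] ≠ l[1] := fun h => zero_ne_one (hnd.getElem_inj_iff.1 h)
  rw [disjoint_iff_inter_eq_empty.1 (hdisj _ _ (hfac 0 _) (hfac 1 _) h01), card_empty] at hm_card
  linarith [hcard _ (hfac 1 hlen)]

variable {k i j : ℕ}

theorem kayakGraph_adj {x y : Fin (k + 2)} : (kayakGraph k).Adj x y ↔ x ≠ y ∧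
    ((x.val < k + k % 2 ∧ y.val < k + k % 2 ∧
        (x.val / 2 = y.val / 2 ∨ x.val / 2 + 1 = y.val / 2 ∨ y.val / 2 + 1 = x.val / 2)) ∨
      (x.val = k + k % 2 ∧ y.val < 2) ∨ (y.val = k + k % 2 ∧ x.val < 2) ∨
      (x.val = k + k % 2 + 1 ∧ k + k % 2 ≤ y.val + 2 ∧ y.val < k + k % 2) ∨
      (y.val = k + k % 2 + 1 ∧ k + k % 2 ≤ x.val + 2 ∧ x.val < k + k % 2)) :=
  Iff.rfl

theorem kayakGraph_induce_connected (hk : 2 ≤ k) {s : Set (Fin (k + 2))}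
    (hs : ∀ j < k / 2, ∃ x ∈ s, x.val / 2 = j) : ((kayakGraph k).induce s).Connected := by
  choose r hrs hr using hs
  have hm : 0 < k / 2 := by omega
  have reach_of_adj {x y : Fin (k + 2)} (hx : x ∈ s) (hy : y ∈ s) (h : (kayakGraph k).Adj x y) :
      ((kayakGraph k).induce s).Reachable ⟨x, hx⟩ ⟨y, hy⟩ :=
    Adj.reachable h
  have reach_r : ∀ j (hj : j < k / 2),
      ((kayakGraph k).induce s).Reachable ⟨r 0 hm, hrs 0 hm⟩ ⟨r j hj, hrs j hj⟩ := by
    intro j hj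
    induction j with
    | zero => rfl
    | succ j ih =>
      have := hr j (by omega)
      have := hr (j + 1) hj
      exact (ih (by omega)).trans (reach_of_adj _ _ (kayakGraph_adj.2 ⟨by omega, by omega⟩))
  have near : ∀ x (hx : x ∈ s), ∃ j hj,
      ((kayakGraph k).induce s).Reachable ⟨r j hj, hrs j hj⟩ ⟨x, hx⟩ := by
    intro x hx
    by_cases hxm : x.val / 2 < k / 2
    · have := hr _ hxm
      rcases eq_or_ne (r _ hxm) x with h | h
      · exact ⟨_, hxm, by simp only [h]; rfl⟩
      · exact ⟨_, hxm, reach_of_adj _ _ (kayakGraph_adj.2 ⟨h, by omega⟩)⟩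
    · by_cases ha : x.val = k + k % 2
      · have := hr 0 hm
        exact ⟨0, hm, reach_of_adj _ _ (kayakGraph_adj.2 ⟨by omega, by omega⟩)⟩
      · have := hr (k / 2 - 1) (by omega)
        exact ⟨k / 2 - 1, by omega, reach_of_adj _ _ (kayakGraph_adj.2 ⟨by omega, by omega⟩)⟩
  refine (connected_iff_exists_forall_reachable _).2 ⟨⟨r 0 hm, hrs 0 hm⟩, fun x => ?_⟩
  obtain ⟨j, hj, hreach⟩ := near x.1 x.2
  exact (reach_r j hj).trans hreach

def kayakBlock (k i : ℕ) : Finset (Fin (k + 2)) :=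
  {x | x.val / 2 = i}

@[simp]
theorem mem_kayakBlock {x : Fin (k + 2)} : x ∈ kayakBlock k i ↔ x.val / 2 = i := by
  simp [kayakBlock]

theorem card_kayakBlock (hi : i < k / 2) : (kayakBlock k i).card = 2 := by
  refine card_eq_two.2 ⟨⟨2 * i, by omega⟩, ⟨2 * i + 1, by omega⟩, by simp [Fin.ext_iff], ?_⟩
  ext x
  simp only [mem_kayakBlock, mem_insert, mem_singleton, Fin.ext_iff]
  omega

theorem disjoint_kayakBlock (hij : i ≠ j) : Disjoint (kayakBlock k i) (kayakBlock k j) :=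
  disjoint_left.2 fun _ hxi hxj => hij ((mem_kayakBlock.1 hxi).symm.trans (mem_kayakBlock.1 hxj))

theorem kayakGraph_not_connected_induce_compl_kayakBlock (hi : i < k / 2) :
    IsDisconn (kayakGraph k) (kayakBlock k i)ᶜ := by
  -- the vertices before the block, together with `a`, are cut off from the rest
  obtain ⟨v, hv, hv_right⟩ :
      ∃ v : Fin (k + 2), v.val / 2 ≠ i ∧ ¬ (v.val < 2 * i ∨ v.val = k + k % 2) := by
    by_cases h : 2 * i + 2 < k + k % 2
    · exact ⟨⟨2 * i + 2, by omega⟩, by simp only; omega, by simp only; omega⟩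
    · exact ⟨⟨k + 1, by omega⟩, by simp only; omega, by simp only; omega⟩
  refine not_connected_induce_of_adj_closed (fun x => x.val < 2 * i ∨ x.val = k + k % 2) ?_
    (u := ⟨k + k % 2, by omega⟩) (by simp; omega) (by simpa using hv) (by simp) hv_right
  intro x y hy hxy hx
  simp only [coe_compl, Set.mem_compl_iff, mem_coe, mem_kayakBlock] at hy
  rw [kayakGraph_adj] at hxy
  omega

theorem isFacet_kayakGraph_iff (hk : 2 ≤ k) (F : Finset (Fin (k + 2))) :
    IsFacet (kayakGraph k) k F ↔ ∃ i < k / 2, F = kayakBlock k i := by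
  constructor
  · rintro ⟨hcard, hdisc⟩
    have hF : F.card = 2 := by
      have := F.card_le_univ
      rw [card_compl] at hcard
      rw [Fintype.card_fin] at hcard this
      omega
    by_contra hne
    push Not at hne
    refine hdisc (kayakGraph_induce_connected hk fun j hj => ?_)
    by_contra hall
    push Not at hall
    have hsub : kayakBlock k j ⊆ F := fun x hx => by
      by_contra hxF
      exact hall x (by simpa using hxF) (mem_kayakBlock.1 hx)
    exact hne j hj (eq_of_subset_of_card_le hsub (by rw [hF, card_kayakBlock hj])).symm
  · rintro ⟨i, hi, rfl⟩
    refine ⟨?_, kayakGraph_not_connected_induce_compl_kayakBlock hi⟩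
    rw [card_compl, Fintype.card_fin, card_kayakBlock hi]
    omega

/-- For `k ≥ 4`, the facets of `Δ_k(G_k)` are exactly the
`m = ⌊k/2⌋ ≥ 2` pairwise disjoint edges `{2i-1, 2i}` (0-indexed: `{2i, 2i+1}` for
`0 ≤ i < m`); in particular `Δ_k(G_k)` is a 1-dimensional complex consisting of
`m ≥ 2` disjoint edges, and it is not shellable. -/
theorem stmt_18 (k : ℕ) (hk : 4 ≤ k) :
    (∀ F : Finset (Fin (k + 2)),
      IsFacet (kayakGraph k) k F ↔
        ∃ i : ℕ, ∃ h : i < k / 2,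
          F = {(⟨2 * i, by omega⟩ : Fin (k + 2)), (⟨2 * i + 1, by omega⟩ : Fin (k + 2))}) ∧
    2 ≤ k / 2 ∧
    ¬ Shellable (IsFacet (kayakGraph k) k) := by
  have hfacet := isFacet_kayakGraph_iff (k := k) (by omega)
  have hblock (i : ℕ) (hi : i < k / 2) :
      kayakBlock k i = {⟨2 * i, by omega⟩, ⟨2 * i + 1, by omega⟩} := by
    ext x
    simp only [mem_kayakBlock, mem_insert, mem_singleton, Fin.ext_iff]
    omega
  refine ⟨fun F => (hfacet F).trans (exists_congr fun i =>
      ⟨fun ⟨hi, hF⟩ => ⟨hi, hF.trans (hblock i hi)⟩,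
        fun ⟨hi, hF⟩ => ⟨hi, hF.trans (hblock i hi).symm⟩⟩),
    by omega, ?_⟩
  have hblock_ne : kayakBlock k 0 ≠ kayakBlock k 1 := fun h => by
    have h0 : (0 : Fin (k + 2)) ∈ kayakBlock k 1 := h ▸ by simp
    simp at h0
  refine not_shellable_of_pairwise_disjoint ((hfacet _).2 ⟨0, by omega, rfl⟩)
    ((hfacet _).2 ⟨1, by omega, rfl⟩) hblock_ne (fun F G hF hG hFG => ?_) (fun F hF => ?_)
  · obtain ⟨i, -, rfl⟩ := (hfacet F).1 hF
    obtain ⟨j, -, rfl⟩ := (hfacet G).1 hG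
    exact disjoint_kayakBlock fun h => hFG (h ▸ rfl)
  · obtain ⟨i, hi, rfl⟩ := (hfacet F).1 hF
    exact (card_kayakBlock hi).ge
end
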